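/- arXiv:2209.00214 — 2 statements merged into one kernel-verified Lean document; each statement's English description precedes it below -/
import Mathlib

section
/- Let φ : M₃ → M₃ be a linear preserver of the Lorentz spectrum with associated orthogonal matrix Q. Then there exists a matrix D ∈ M₂ with D = I₂ or D = diag(1, −1) such that φ([Ã 0; 0ᵀ 0]) = [Q D Ã D⁻¹ Qᵀ 0; 0ᵀ 0] for all Ã ∈ M₂. -/
open Matrix

noncomputable section

/-- Euclidean norm of a vector in `ℝ^n`. -/
def eucNorm {n : ℕ} (x : Fin n → ℝ) : ℝ := Real.sqrt (∑ i, x i ^ 2)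

/-- The Lorentz cone in `ℝ^(n+1)`: vectors `(ξ, η)` with `‖ξ‖ ≤ η`. -/
def lorentzCone (n : ℕ) : Set (Fin (n + 1) → ℝ) :=
  {x | eucNorm (fun i : Fin n => x i.castSucc) ≤ x (Fin.last n)}

/-- `x` is a Lorentz eigenvector of `A` associated with the Lorentz eigenvalue `l`. -/
def IsLEigenvector {n : ℕ} (A : Matrix (Fin (n + 1)) (Fin (n + 1)) ℝ) (l : ℝ)
    (x : Fin (n + 1) → ℝ) : Prop :=
  x ≠ 0 ∧ x ∈ lorentzCone n ∧ (A - l • 1) *ᵥ x ∈ lorentzCone n ∧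
    x ⬝ᵥ ((A - l • 1) *ᵥ x) = 0

/-- The Lorentz spectrum of `A`. -/
def sigmaL {n : ℕ} (A : Matrix (Fin (n + 1)) (Fin (n + 1)) ℝ) : Set ℝ :=
  {l | ∃ x, IsLEigenvector A l x}

/-- The interior Lorentz spectrum of `A`. -/
def sigmaInt {n : ℕ} (A : Matrix (Fin (n + 1)) (Fin (n + 1)) ℝ) : Set ℝ :=
  {l | ∃ x, IsLEigenvector A l x ∧
    eucNorm (fun i : Fin n => x i.castSucc) < x (Fin.last n)}

/-- The boundary Lorentz spectrum of `A`. -/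
def sigmaBd {n : ℕ} (A : Matrix (Fin (n + 1)) (Fin (n + 1)) ℝ) : Set ℝ :=
  {l | ∃ x, IsLEigenvector A l x ∧
    eucNorm (fun i : Fin n => x i.castSucc) = x (Fin.last n)}

/-- The block matrix `[X u; vᵀ a]` in `M₃`. -/
def blk (X : Matrix (Fin 2) (Fin 2) ℝ) (u v : Fin 2 → ℝ) (a : ℝ) :
    Matrix (Fin 3) (Fin 3) ℝ :=
  Matrix.of (Fin.snoc (fun i : Fin 2 => Fin.snoc (X i) (u i)) (Fin.snoc v a))

@[simp] lemma vecCons_two' {α : Type*} {n : ℕ} (a : α) (f : Fin (n+2) → α) :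
    vecCons a f 2 = f 1 := rfl

@[simp] lemma vecCons_three' {α : Type*} {n : ℕ} (a : α) (f : Fin (n+3) → α) :
    vecCons a f 3 = f 2 := rfl

set_option maxHeartbeats 1600000

lemma blk_eq (X : Matrix (Fin 2) (Fin 2) ℝ) (u v : Fin 2 → ℝ) (a : ℝ) :
    blk X u v a = !![X 0 0, X 0 1, u 0; X 1 0, X 1 1, u 1; v 0, v 1, a] := by
  ext i j
  fin_cases i <;> fin_cases j <;> simp [blk, Fin.snoc] <;> rfl

lemma memK_iff (x : Fin 3 → ℝ) :
    x ∈ lorentzCone 2 ↔ 0 ≤ x 2 ∧ x 0 ^ 2 + x 1 ^ 2 ≤ x 2 ^ 2 := by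
  have h1 : (fun i : Fin 2 => x i.castSucc) = ![x 0, x 1] := by
    funext i; fin_cases i <;> rfl
  have h2 : x (Fin.last 2) = x 2 := rfl
  constructor
  · intro h
    simp only [lorentzCone, Set.mem_setOf_eq, eucNorm, h1, h2, Fin.sum_univ_two] at h
    norm_num at h
    have h0 : (0:ℝ) ≤ x 0 ^ 2 + x 1 ^ 2 := by positivity
    have hx2 : 0 ≤ x 2 := le_trans (Real.sqrt_nonneg _) h
    refine ⟨hx2, ?_⟩
    have := Real.sq_sqrt h0
    nlinarith [Real.sqrt_nonneg (x 0 ^ 2 + x 1 ^ 2)]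
  · rintro ⟨hx2, h⟩
    simp only [lorentzCone, Set.mem_setOf_eq, eucNorm, h1, h2, Fin.sum_univ_two]
    norm_num
    calc Real.sqrt (x 0 ^ 2 + x 1 ^ 2) ≤ Real.sqrt (x 2 ^ 2) := Real.sqrt_le_sqrt h
    _ = x 2 := by rw [Real.sqrt_sq hx2]

abbrev M3 := Matrix (Fin 3) (Fin 3) ℝ
abbrev M2 := Matrix (Fin 2) (Fin 2) ℝ

lemma mulVec3 (B : M3) (x : Fin 3 → ℝ) (i : Fin 3) :
    (B *ᵥ x) i = B i 0 * x 0 + B i 1 * x 1 + B i 2 * x 2 := by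
  simp [Matrix.mulVec, dotProduct, Fin.sum_univ_three]

lemma dot3 (x y : Fin 3 → ℝ) : x ⬝ᵥ y = x 0 * y 0 + x 1 * y 1 + x 2 * y 2 := by
  simp [dotProduct, Fin.sum_univ_three]

lemma sub_smul_one_mulVec (B : M3) (l : ℝ) (x : Fin 3 → ℝ) :
    (B - l • 1) *ᵥ x = B *ᵥ x - l • x := by
  rw [Matrix.sub_mulVec, Matrix.smul_mulVec, Matrix.one_mulVec]

def IntEv (B : M3) (l : ℝ) : Prop :=
  ∃ x : Fin 3 → ℝ, x 0 ^ 2 + x 1 ^ 2 < x 2 ^ 2 ∧ 0 < x 2 ∧ B *ᵥ x = l • x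

def BdEv (B : M3) (l : ℝ) : Prop :=
  ∃ p q c : ℝ, p ^ 2 + q ^ 2 = 1 ∧
    B 0 0 * p + B 0 1 * q + B 0 2 = c * p ∧
    B 1 0 * p + B 1 1 * q + B 1 2 = c * q ∧
    c + (B 2 0 * p + B 2 1 * q + B 2 2) = 2 * l ∧ c ≤ l

theorem mem_sigmaL_iff (B : M3) (l : ℝ) : l ∈ sigmaL B ↔ IntEv B l ∨ BdEv B l := by
  constructor
  · rintro ⟨x, hx0, hxK, hyK, hdot⟩
    set y := (B - l • 1) *ᵥ x with hy
    have hyi : ∀ i, y i = (B i 0 * x 0 + B i 1 * x 1 + B i 2 * x 2) - l * x i := by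
      intro i
      rw [hy, sub_smul_one_mulVec]
      simp [mulVec3]
    rw [memK_iff] at hxK hyK
    rw [dot3] at hdot
    have hx2 : 0 < x 2 := by
      rcases lt_or_eq_of_le hxK.1 with h | h
      · exact h
      · exfalso
        apply hx0
        have h0 : x 0 = 0 ∧ x 1 = 0 := by
          constructor <;> nlinarith [hxK.2, sq_nonneg (x 0), sq_nonneg (x 1)]
        funext i; fin_cases i
        · exact h0.1
        · exact h0.2
        · exact h.symm
    rcases lt_or_eq_of_le hxK.2 with hlt | heq
    · -- interior
      left
      have hy2 : y 2 = 0 := by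
        by_contra hne
        have h1 : (x 0 * y 0 + x 1 * y 1) ^ 2 ≤ (x 0 ^ 2 + x 1 ^ 2) * (y 0 ^ 2 + y 1 ^ 2) := by
          nlinarith [sq_nonneg (x 0 * y 1 - x 1 * y 0)]
        have h2 : x 0 * y 0 + x 1 * y 1 = - (x 2 * y 2) := by linarith [hdot]
        have hy2pos : 0 < y 2 := lt_of_le_of_ne hyK.1 (Ne.symm hne)
        have ha : (0:ℝ) ≤ x 0 ^ 2 + x 1 ^ 2 := by positivity
        have hb1 : (x 0 ^ 2 + x 1 ^ 2) * (y 0 ^ 2 + y 1 ^ 2) ≤ (x 0 ^ 2 + x 1 ^ 2) * (y 2 ^ 2) :=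
          mul_le_mul_of_nonneg_left hyK.2 ha
        have hb : (x 2 * y 2) ^ 2 ≤ (x 0 ^ 2 + x 1 ^ 2) * (y 2 ^ 2) := by
          have : (x 2 * y 2) ^ 2 = (x 0 * y 0 + x 1 * y 1) ^ 2 := by rw [h2]; ring
          rw [this]; exact le_trans h1 hb1
        have hc : (x 0 ^ 2 + x 1 ^ 2) * y 2 ^ 2 < x 2 ^ 2 * y 2 ^ 2 := by
          have := mul_pos hy2pos hy2pos
          nlinarith [hlt]
        nlinarith [hb, hc]
      have hy01 : y 0 = 0 ∧ y 1 = 0 := by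
        constructor <;> nlinarith [hyK.2, sq_nonneg (y 0), sq_nonneg (y 1)]
      refine ⟨x, hlt, hx2, ?_⟩
      funext i
      have hz : y i = 0 := by fin_cases i; exacts [hy01.1, hy01.2, hy2]
      have h3 := hyi i
      rw [hz] at h3
      have h4 : (B *ᵥ x) i = l * x i := by rw [mulVec3]; linarith
      simpa [Pi.smul_apply] using h4
    · -- boundary
      right
      set t := x 2 with htdef
      have ht : t ≠ 0 := ne_of_gt hx2
      set p := x 0 / t with hp
      set q := x 1 / t with hq
      have hx0' : x 0 = t * p := by rw [hp]; field_simp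
      have hx1' : x 1 = t * q := by rw [hq]; field_simp
      have hz0 : B 0 0 * x 0 + B 0 1 * x 1 + B 0 2 * x 2 = t * (B 0 0 * p + B 0 1 * q + B 0 2) := by
        rw [hx0', hx1']; ring
      set z0 := B 0 0 * p + B 0 1 * q + B 0 2 with hz0d
      set z1 := B 1 0 * p + B 1 1 * q + B 1 2 with hz1d
      set z2 := B 2 0 * p + B 2 1 * q + B 2 2 with hz2d
      have hunit : p ^ 2 + q ^ 2 = 1 := by
        rw [hp, hq]; field_simp; linarith [heq]
      have hy0 : y 0 = t * (z0 - l * p) := by rw [hyi 0, hx0', hx1', hz0d]; ring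
      have hy1 : y 1 = t * (z1 - l * q) := by rw [hyi 1, hx0', hx1', hz1d]; ring
      have hy2 : y 2 = t * (z2 - l) := by rw [hyi 2, hx0', hx1', hz2d]; ring
      have hl2 : l ≤ z2 := by nlinarith [hyK.1, hx2, hy2]
      set c := p * z0 + q * z1 with hc
      have hcomp : c + z2 = 2 * l := by
        have h5 : t ^ 2 * ((p * (z0 - l * p) + q * (z1 - l * q)) + (z2 - l)) = 0 := by
          rw [← hdot, hy0, hy1, hy2, hx0', hx1']; ring
        have ht2 : t ^ 2 ≠ 0 := pow_ne_zero 2 ht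
        have h4 : (p * (z0 - l * p) + q * (z1 - l * q)) + (z2 - l) = 0 :=
          (mul_eq_zero.mp h5).resolve_left ht2
        linear_combination h4 + l * hunit
      have hsq' : (z0 - l * p) ^ 2 + (z1 - l * q) ^ 2 ≤ (l - c) ^ 2 := by
        have h6 := hyK.2
        rw [hy0, hy1, hy2] at h6
        have h7 : (z0 - l * p) ^ 2 + (z1 - l * q) ^ 2 ≤ (z2 - l) ^ 2 := by
          have ht2 : 0 < t ^ 2 := by positivity
          nlinarith [h6]
        have h8 : z2 - l = l - c := by linarith
        rw [h8] at h7; exact h7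
      have e2 : (z0 - l * p) ^ 2 + (z1 - l * q) ^ 2
          = z0 ^ 2 + z1 ^ 2 - 2 * l * c + l ^ 2 := by
        rw [hc]; linear_combination l ^ 2 * hunit
      have hnorm : z0 ^ 2 + z1 ^ 2 ≤ c ^ 2 := by nlinarith [hsq', e2]
      have e1 : (q * z0 - p * z1) ^ 2 + c ^ 2 = z0 ^ 2 + z1 ^ 2 := by
        rw [hc]; linear_combination (z0 ^ 2 + z1 ^ 2) * hunit
      have hlagsq : (q * z0 - p * z1) ^ 2 ≤ 0 := by linarith
      have hlag0 : q * z0 - p * z1 = 0 := by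
        have := sq_nonneg (q * z0 - p * z1)
        have h9 : (q * z0 - p * z1) ^ 2 = 0 := le_antisymm hlagsq this
        exact pow_eq_zero_iff (by norm_num) |>.mp h9
      have he0 : z0 = c * p := by rw [hc]; linear_combination q * hlag0 - z0 * hunit
      have he1 : z1 = c * q := by rw [hc]; linear_combination (-p) * hlag0 - z1 * hunit
      refine ⟨p, q, c, hunit, ?_, ?_, ?_, by linarith⟩
      · rw [← hz0d]; exact he0
      · rw [← hz1d]; exact he1
      · rw [← hz2d]; linarith
  · rintro (⟨x, hlt, hx2, hev⟩ | ⟨p, q, c, hunit, he0, he1, hcomp, hcl⟩)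
    · refine ⟨x, ?_, ?_, ?_, ?_⟩
      · intro h0
        rw [h0] at hx2
        simp at hx2
      · rw [memK_iff]; exact ⟨le_of_lt hx2, le_of_lt hlt⟩
      · rw [sub_smul_one_mulVec, hev]
        simp [memK_iff]
      · rw [sub_smul_one_mulVec, hev]
        simp
    · refine ⟨![p, q, 1], ?_, ?_, ?_, ?_⟩
      · intro h0
        have h1 := congrFun h0 2
        simp at h1
      · rw [memK_iff]
        norm_num
        nlinarith [hunit]
      · rw [memK_iff, sub_smul_one_mulVec]
        constructor
        · simp only [Pi.sub_apply, Pi.smul_apply, mulVec3]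
          norm_num
          linarith
        · simp only [Pi.sub_apply, Pi.smul_apply, mulVec3]
          norm_num
          have k0 : B 0 0 * p + B 0 1 * q + B 0 2 - l * p = (c - l) * p := by linear_combination he0
          have k1 : B 1 0 * p + B 1 1 * q + B 1 2 - l * q = (c - l) * q := by linear_combination he1
          have k2 : B 2 0 * p + B 2 1 * q + B 2 2 - l = l - c := by linear_combination hcomp
          rw [k0, k1, k2]
          have k3 : ((c - l) * p) ^ 2 + ((c - l) * q) ^ 2 = (l - c) ^ 2 := by
            linear_combination (c - l) ^ 2 * hunit
          linarith [k3]
      · rw [sub_smul_one_mulVec, dot3]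
        simp only [Pi.sub_apply, Pi.smul_apply, mulVec3]
        norm_num
        have k0 : B 0 0 * p + B 0 1 * q + B 0 2 - l * p = (c - l) * p := by linear_combination he0
        have k1 : B 1 0 * p + B 1 1 * q + B 1 2 - l * q = (c - l) * q := by linear_combination he1
        have k2 : B 2 0 * p + B 2 1 * q + B 2 2 - l = l - c := by linear_combination hcomp
        rw [k0, k1, k2]
        linear_combination (c - l) * hunit
-- ### PART 3: step 1

lemma mul_abs_le (b x : ℝ) (hx : |x| ≤ 1) : b * x ≤ |b| := by
  calc b * x ≤ |b * x| := le_abs_self _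
  _ = |b| * |x| := abs_mul b x
  _ ≤ |b| * 1 := mul_le_mul_of_nonneg_left hx (abs_nonneg b)
  _ = |b| := mul_one _

lemma quad_ev_zero {c2 c1 c0 T : ℝ} (h : ∀ a : ℝ, T < a → c2 * a ^ 2 + c1 * a + c0 = 0) :
    c2 = 0 ∧ c1 = 0 ∧ c0 = 0 := by
  have h1 := h (T + 1) (by linarith)
  have h2 := h (T + 2) (by linarith)
  have h3 := h (T + 3) (by linarith)
  have hc2 : c2 = 0 := by linear_combination (h1 - 2 * h2 + h3) / 2
  have hc1 : c1 = 0 := by linear_combination h2 - h1 - (2 * T + 3) * hc2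
  have hc0 : c0 = 0 := by linear_combination h1 - (T + 1) ^ 2 * hc2 - (T + 1) * hc1
  exact ⟨hc2, hc1, hc0⟩

lemma a_mem_known (X : M2) (v : Fin 2 → ℝ) (a : ℝ) : a ∈ sigmaL (blk X 0 v a) := by
  rw [mem_sigmaL_iff]
  left
  refine ⟨![0, 0, 1], by norm_num, by norm_num, ?_⟩
  funext i
  rw [mulVec3, blk_eq]
  fin_cases i <;> simp

lemma Wplus_eq (W : M3) (v0 v1 a : ℝ) :
    W + blk 0 0 ![v0, v1] a =
      !![W 0 0, W 0 1, W 0 2; W 1 0, W 1 1, W 1 2;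
         W 2 0 + v0, W 2 1 + v1, W 2 2 + a] := by
  rw [blk_eq]
  ext i j
  fin_cases i <;> fin_cases j <;> simp

lemma Wplus_sub_eq (W : M3) (v0 v1 a : ℝ) :
    W + blk 0 0 ![v0, v1] a - a • 1 =
      !![W 0 0 - a, W 0 1, W 0 2; W 1 0, W 1 1 - a, W 1 2;
         W 2 0 + v0, W 2 1 + v1, W 2 2] := by
  rw [blk_eq]
  ext i j
  fin_cases i <;> fin_cases j <;> simp [Matrix.one_apply] <;> ring

lemma step1 (W : M3)
    (Hmem : ∀ v0 v1 a : ℝ, a ∈ sigmaL (W + blk 0 0 ![v0, v1] a)) :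
    W 0 2 = 0 ∧ W 1 2 = 0 ∧ W 2 2 = 0 := by
  have key : ∀ v0 v1 : ℝ,
      W 2 2 = 0 ∧
      (W 1 2 * (W 2 1 + v1) + W 0 2 * (W 2 0 + v0) - (W 0 0 + W 1 1) * W 2 2) = 0 ∧
      (W 0 0 * W 1 1 * W 2 2 - W 0 0 * W 1 2 * (W 2 1 + v1) - W 0 1 * W 1 0 * W 2 2
        + W 0 1 * W 1 2 * (W 2 0 + v0) + W 0 2 * W 1 0 * (W 2 1 + v1)
        - W 0 2 * W 1 1 * (W 2 0 + v0)) = 0 := by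
    intro v0 v1
    set T : ℝ := |W 0 0| + |W 0 1| + |W 0 2| + |W 1 0| + |W 1 1| + |W 1 2|
      + |W 2 0 + v0| + |W 2 1 + v1| + |W 2 2| with hT
    apply quad_ev_zero (T := T)
    intro a ha
    have hm := Hmem v0 v1 a
    rw [Wplus_eq, mem_sigmaL_iff] at hm
    rcases hm with ⟨x, hlt, hx2, hev⟩ | ⟨p, q, c, hu, h0, h1, h2, hcl⟩
    · -- interior: determinant vanishes
      have hker : (!![W 0 0, W 0 1, W 0 2; W 1 0, W 1 1, W 1 2;
          W 2 0 + v0, W 2 1 + v1, W 2 2 + a] - a • 1) *ᵥ x = 0 := by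
        rw [sub_smul_one_mulVec, hev, sub_self]
      have hx0 : x ≠ 0 := by
        intro h0'
        rw [h0'] at hx2
        simp at hx2
      have hdet : (!![W 0 0, W 0 1, W 0 2; W 1 0, W 1 1, W 1 2;
          W 2 0 + v0, W 2 1 + v1, W 2 2 + a] - a • 1).det = 0 :=
        Matrix.exists_mulVec_eq_zero_iff.mp ⟨x, hx0, hker⟩
      have heq : !![W 0 0, W 0 1, W 0 2; W 1 0, W 1 1, W 1 2;
          W 2 0 + v0, W 2 1 + v1, W 2 2 + a] - a • 1 =
          !![W 0 0 - a, W 0 1, W 0 2; W 1 0, W 1 1 - a, W 1 2;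
          W 2 0 + v0, W 2 1 + v1, W 2 2] := by
        have := Wplus_sub_eq W v0 v1 a
        rw [Wplus_eq] at this
        exact this
      rw [heq, Matrix.det_fin_three] at hdet
      norm_num at hdet
      linear_combination hdet
    · -- boundary: impossible for large a
      exfalso
      norm_num at h0 h1 h2
      have hp2 : p ^ 2 ≤ 1 := by nlinarith [sq_nonneg q]
      have hq2 : q ^ 2 ≤ 1 := by nlinarith [sq_nonneg p]
      have hp1 : |p| ≤ 1 := (sq_le_one_iff_abs_le_one p).mp hp2
      have hq1 : |q| ≤ 1 := (sq_le_one_iff_abs_le_one q).mp hq2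
      have hpq : |p * q| ≤ 1 := by
        rw [abs_mul]
        exact mul_le_one₀ hp1 (abs_nonneg q) hq1
      have hpp : |p * p| ≤ 1 := by rw [abs_mul]; exact mul_le_one₀ hp1 (abs_nonneg p) hp1
      have hqq : |q * q| ≤ 1 := by rw [abs_mul]; exact mul_le_one₀ hq1 (abs_nonneg q) hq1
      have harr : a = W 0 0 * (p * p) + W 0 1 * (p * q) + W 0 2 * p
          + W 1 0 * (p * q) + W 1 1 * (q * q) + W 1 2 * q
          + (W 2 0 + v0) * p + (W 2 1 + v1) * q + W 2 2 := by
        linear_combination -h2 - p * h0 - q * h1 - c * hu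
      have b1 := mul_abs_le (W 0 0) (p * p) hpp
      have b2 := mul_abs_le (W 0 1) (p * q) hpq
      have b3 := mul_abs_le (W 0 2) p hp1
      have b4 := mul_abs_le (W 1 0) (p * q) hpq
      have b5 := mul_abs_le (W 1 1) (q * q) hqq
      have b6 := mul_abs_le (W 1 2) q hq1
      have b7 := mul_abs_le (W 2 0 + v0) p hp1
      have b8 := mul_abs_le (W 2 1 + v1) q hq1
      have b9 := le_abs_self (W 2 2)
      linarith [harr]
  obtain ⟨h22, hB0, _⟩ := key 0 0
  obtain ⟨-, hB1, -⟩ := key 1 0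
  obtain ⟨-, hB2, -⟩ := key 0 1
  refine ⟨?_, ?_, h22⟩ <;> linarith [hB0, hB1, hB2]

lemma unit_abs (p q : ℝ) (hu : p ^ 2 + q ^ 2 = 1) : |p| ≤ 1 ∧ |q| ≤ 1 := by
  constructor
  · exact (sq_le_one_iff_abs_le_one p).mp (by nlinarith [sq_nonneg q])
  · exact (sq_le_one_iff_abs_le_one q).mp (by nlinarith [sq_nonneg p])

lemma dot_bound (v0 v1 p q : ℝ) (hp : |p| ≤ 1) (hq : |q| ≤ 1) :
    |v0 * p + v1 * q| ≤ |v0| + |v1| := by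
  rw [abs_le]
  constructor
  · have h1 := mul_abs_le (-v0) p hp
    have h2 := mul_abs_le (-v1) q hq
    rw [abs_neg] at h1 h2
    linarith
  · linarith [mul_abs_le v0 p hp, mul_abs_le v1 q hq]

lemma eigen_c_bound (y00 y01 y10 y11 p q c : ℝ) (hu : p ^ 2 + q ^ 2 = 1)
    (he0 : y00 * p + y01 * q = c * p) (he1 : y10 * p + y11 * q = c * q) :
    |c| ≤ |y00| + |y01| + |y10| + |y11| := by
  obtain ⟨hp, hq⟩ := unit_abs p q hu
  have hpp : |p * p| ≤ 1 := by rw [abs_mul]; exact mul_le_one₀ hp (abs_nonneg p) hp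
  have hqq : |q * q| ≤ 1 := by rw [abs_mul]; exact mul_le_one₀ hq (abs_nonneg q) hq
  have hpq : |p * q| ≤ 1 := by rw [abs_mul]; exact mul_le_one₀ hp (abs_nonneg q) hq
  have hc : c = y00 * (p * p) + y01 * (p * q) + y10 * (p * q) + y11 * (q * q) := by
    linear_combination -p * he0 - q * he1 - c * hu
  rw [abs_le]
  constructor
  · have h1 := mul_abs_le (-y00) (p * p) hpp
    have h2 := mul_abs_le (-y01) (p * q) hpq
    have h3 := mul_abs_le (-y10) (p * q) hpq
    have h4 := mul_abs_le (-y11) (q * q) hqq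
    rw [abs_neg] at h1 h2 h3 h4
    linarith
  · linarith [mul_abs_le y00 (p * p) hpp, mul_abs_le y01 (p * q) hpq,
      mul_abs_le y10 (p * q) hpq, mul_abs_le y11 (q * q) hqq]

lemma lam_facts (K c t a l : ℝ) (hK : 2 ≤ K) (ha : a = 8 * K ^ 2) (hc : |c| ≤ K)
    (ht : |t| ≤ 2 * K) (hl : l = (c + (t + a)) / 2) :
    3 * K ≤ l ∧ l ≠ a ∧ 2 * c ≤ c + (t + a) := by
  obtain ⟨hc1, hc2⟩ := abs_le.mp hc
  obtain ⟨ht1, ht2⟩ := abs_le.mp ht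
  refine ⟨by nlinarith, ?_, by nlinarith⟩
  have : l < a := by nlinarith
  exact ne_of_lt this

lemma quad_ne (K l y00 y01 y10 y11 : ℝ) (hK : 2 ≤ K) (h3 : 3 * K ≤ l)
    (b00 : |y00| ≤ K) (b01 : |y01| ≤ K) (b10 : |y10| ≤ K) (b11 : |y11| ≤ K) :
    (y00 - l) * (y11 - l) - y01 * y10 ≠ 0 := by
  obtain ⟨c00, d00⟩ := abs_le.mp b00
  obtain ⟨c01, d01⟩ := abs_le.mp b01
  obtain ⟨c10, d10⟩ := abs_le.mp b10
  obtain ⟨c11, d11⟩ := abs_le.mp b11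
  have : 0 < (y00 - l) * (y11 - l) - y01 * y10 := by nlinarith
  exact ne_of_gt this

lemma helper_mem (Y : M2) (g0 g1 a p q c : ℝ) (hu : p ^ 2 + q ^ 2 = 1)
    (he0 : Y 0 0 * p + Y 0 1 * q = c * p) (he1 : Y 1 0 * p + Y 1 1 * q = c * q)
    (hc : 2 * c ≤ c + (g0 * p + g1 * q + a)) :
    (c + (g0 * p + g1 * q + a)) / 2 ∈ sigmaL (blk Y 0 ![g0, g1] a) := by
  rw [mem_sigmaL_iff]
  right
  refine ⟨p, q, c, hu, ?_, ?_, ?_, by linarith⟩ <;>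
    rw [blk_eq] <;> norm_num <;> linarith [he0, he1]

lemma helper_ext (Y : M2) (g0 g1 a l : ℝ) (hl : l ∈ sigmaL (blk Y 0 ![g0, g1] a))
    (hne : l ≠ a) (hq : (Y 0 0 - l) * (Y 1 1 - l) - Y 0 1 * Y 1 0 ≠ 0) :
    ∃ p q c : ℝ, p ^ 2 + q ^ 2 = 1 ∧ Y 0 0 * p + Y 0 1 * q = c * p ∧
      Y 1 0 * p + Y 1 1 * q = c * q ∧ c + (g0 * p + g1 * q + a) = 2 * l := by
  rw [mem_sigmaL_iff] at hl
  rcases hl with ⟨x, hlt, hx2, hev⟩ | ⟨p, q, c, hu, h0, h1, h2, hcl⟩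
  · exfalso
    have hker : (blk Y 0 ![g0, g1] a - l • 1) *ᵥ x = 0 := by
      rw [sub_smul_one_mulVec, hev, sub_self]
    have hx0 : x ≠ 0 := by
      intro h0'
      rw [h0'] at hx2
      simp at hx2
    have hdet : (blk Y 0 ![g0, g1] a - l • 1).det = 0 :=
      Matrix.exists_mulVec_eq_zero_iff.mp ⟨x, hx0, hker⟩
    have heq : blk Y 0 ![g0, g1] a - l • 1 =
        !![Y 0 0 - l, Y 0 1, 0; Y 1 0, Y 1 1 - l, 0; g0, g1, a - l] := by
      rw [blk_eq]
      ext i j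
      fin_cases i <;> fin_cases j <;> simp [Matrix.one_apply]
    rw [heq, Matrix.det_fin_three] at hdet
    norm_num at hdet
    have hfac : ((Y 0 0 - l) * (Y 1 1 - l) - Y 0 1 * Y 1 0) * (a - l) = 0 := by
      linear_combination hdet
    rcases mul_eq_zero.mp hfac with h | h
    · exact hq h
    · exact hne (by linarith)
  · rw [blk_eq] at h0 h1 h2
    norm_num at h0 h1 h2
    exact ⟨p, q, c, hu, by linarith, by linarith, by linarith⟩

def TP (y00 y01 y10 y11 g0 g1 s : ℝ) : Prop :=
  ∃ p q c : ℝ, p ^ 2 + q ^ 2 = 1 ∧ y00 * p + y01 * q = c * p ∧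
    y10 * p + y11 * q = c * q ∧ s = c + (g0 * p + g1 * q)

lemma star (W : M3) (A : M2) (h02 : W 0 2 = 0) (h12 : W 1 2 = 0) (h22 : W 2 2 = 0)
    (H : ∀ v0 v1 a : ℝ,
      sigmaL (W + blk 0 0 ![v0, v1] a) = sigmaL (blk A 0 ![v0, v1] a))
    (v0 v1 s : ℝ) :
    TP (A 0 0) (A 0 1) (A 1 0) (A 1 1) v0 v1 s ↔
      TP (W 0 0) (W 0 1) (W 1 0) (W 1 1) (W 2 0 + v0) (W 2 1 + v1) s := by
  set K : ℝ := |A 0 0| + |A 0 1| + |A 1 0| + |A 1 1| +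
    |W 0 0| + |W 0 1| + |W 1 0| + |W 1 1| +
    |W 2 0 + v0| + |W 2 1 + v1| + |v0| + |v1| + 2 with hK
  have hK2 : 2 ≤ K := by
    have := abs_nonneg (A 0 0); have := abs_nonneg (A 0 1); have := abs_nonneg (A 1 0)
    have := abs_nonneg (A 1 1); have := abs_nonneg (W 0 0); have := abs_nonneg (W 0 1)
    have := abs_nonneg (W 1 0); have := abs_nonneg (W 1 1); have := abs_nonneg (W 2 0 + v0)
    have := abs_nonneg (W 2 1 + v1); have := abs_nonneg v0; have := abs_nonneg v1
    linarith
  set a : ℝ := 8 * K ^ 2 with ha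
  have hWmat : W + blk 0 0 ![v0, v1] a =
      blk !![W 0 0, W 0 1; W 1 0, W 1 1] 0 ![W 2 0 + v0, W 2 1 + v1] a := by
    rw [Wplus_eq, blk_eq]
    norm_num [h02, h12, h22]
  have hAabs : |A 0 0| ≤ K ∧ |A 0 1| ≤ K ∧ |A 1 0| ≤ K ∧ |A 1 1| ≤ K := by
    have := abs_nonneg (A 0 0); have := abs_nonneg (A 0 1); have := abs_nonneg (A 1 0)
    have := abs_nonneg (A 1 1); have := abs_nonneg (W 0 0); have := abs_nonneg (W 0 1)
    have := abs_nonneg (W 1 0); have := abs_nonneg (W 1 1); have := abs_nonneg (W 2 0 + v0)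
    have := abs_nonneg (W 2 1 + v1); have := abs_nonneg v0; have := abs_nonneg v1
    refine ⟨by linarith, by linarith, by linarith, by linarith⟩
  have hWabs : |W 0 0| ≤ K ∧ |W 0 1| ≤ K ∧ |W 1 0| ≤ K ∧ |W 1 1| ≤ K := by
    have := abs_nonneg (A 0 0); have := abs_nonneg (A 0 1); have := abs_nonneg (A 1 0)
    have := abs_nonneg (A 1 1); have := abs_nonneg (W 0 0); have := abs_nonneg (W 0 1)
    have := abs_nonneg (W 1 0); have := abs_nonneg (W 1 1); have := abs_nonneg (W 2 0 + v0)
    have := abs_nonneg (W 2 1 + v1); have := abs_nonneg v0; have := abs_nonneg v1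
    refine ⟨by linarith, by linarith, by linarith, by linarith⟩
  constructor
  · rintro ⟨p, q, c, hu, he0, he1, hs⟩
    obtain ⟨hp, hq⟩ := unit_abs p q hu
    have hcb : |c| ≤ K := by
      have := eigen_c_bound (A 0 0) (A 0 1) (A 1 0) (A 1 1) p q c hu he0 he1
      have := abs_nonneg (W 0 0); have := abs_nonneg (W 0 1)
      have := abs_nonneg (W 1 0); have := abs_nonneg (W 1 1); have := abs_nonneg (W 2 0 + v0)
      have := abs_nonneg (W 2 1 + v1); have := abs_nonneg v0; have := abs_nonneg v1
      linarith
    have htb : |v0 * p + v1 * q| ≤ 2 * K := by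
      have := dot_bound v0 v1 p q hp hq
      have := abs_nonneg (A 0 0); have := abs_nonneg (A 0 1); have := abs_nonneg (A 1 0)
      have := abs_nonneg (A 1 1); have := abs_nonneg (W 0 0); have := abs_nonneg (W 0 1)
      have := abs_nonneg (W 1 0); have := abs_nonneg (W 1 1); have := abs_nonneg (W 2 0 + v0)
      have := abs_nonneg (W 2 1 + v1)
      linarith
    obtain ⟨h3K, hnea, h2c⟩ := lam_facts K c (v0 * p + v1 * q) a
      ((c + (v0 * p + v1 * q + a)) / 2) hK2 ha hcb htb (by ring)
    have hmem := helper_mem A v0 v1 a p q c hu he0 he1 h2c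
    rw [← H v0 v1 a, hWmat] at hmem
    obtain ⟨p', q', c', hu', he0', he1', hsum⟩ :=
      helper_ext !![W 0 0, W 0 1; W 1 0, W 1 1] (W 2 0 + v0) (W 2 1 + v1) a
        ((c + (v0 * p + v1 * q + a)) / 2) hmem hnea
        (by
          norm_num
          exact quad_ne K _ (W 0 0) (W 0 1) (W 1 0) (W 1 1) hK2 h3K
            hWabs.1 hWabs.2.1 hWabs.2.2.1 hWabs.2.2.2)
    norm_num at he0' he1'
    exact ⟨p', q', c', hu', he0', he1', by linarith [hsum, hs]⟩
  · rintro ⟨p, q, c, hu, he0, he1, hs⟩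
    obtain ⟨hp, hq⟩ := unit_abs p q hu
    have hcb : |c| ≤ K := by
      have := eigen_c_bound (W 0 0) (W 0 1) (W 1 0) (W 1 1) p q c hu he0 he1
      have := abs_nonneg (A 0 0); have := abs_nonneg (A 0 1); have := abs_nonneg (A 1 0)
      have := abs_nonneg (A 1 1); have := abs_nonneg (W 2 0 + v0)
      have := abs_nonneg (W 2 1 + v1); have := abs_nonneg v0; have := abs_nonneg v1
      linarith
    have htb : |(W 2 0 + v0) * p + (W 2 1 + v1) * q| ≤ 2 * K := by
      have := dot_bound (W 2 0 + v0) (W 2 1 + v1) p q hp hq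
      have := abs_nonneg (A 0 0); have := abs_nonneg (A 0 1); have := abs_nonneg (A 1 0)
      have := abs_nonneg (A 1 1); have := abs_nonneg (W 0 0); have := abs_nonneg (W 0 1)
      have := abs_nonneg (W 1 0); have := abs_nonneg (W 1 1)
      have := abs_nonneg v0; have := abs_nonneg v1
      linarith
    obtain ⟨h3K, hnea, h2c⟩ := lam_facts K c ((W 2 0 + v0) * p + (W 2 1 + v1) * q) a
      ((c + ((W 2 0 + v0) * p + (W 2 1 + v1) * q + a)) / 2) hK2 ha hcb htb (by ring)
    have hmem := helper_mem !![W 0 0, W 0 1; W 1 0, W 1 1] (W 2 0 + v0) (W 2 1 + v1) a p q c hu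
      (by norm_num; linarith [he0]) (by norm_num; linarith [he1]) h2c
    rw [← hWmat, H v0 v1 a] at hmem
    obtain ⟨p', q', c', hu', he0', he1', hsum⟩ :=
      helper_ext A v0 v1 a _ hmem hnea
        (quad_ne K _ (A 0 0) (A 0 1) (A 1 0) (A 1 1) hK2 h3K
          hAabs.1 hAabs.2.1 hAabs.2.2.1 hAabs.2.2.2)
    exact ⟨p', q', c', hu', he0', he1', by linarith [hsum, hs]⟩

lemma pigeon {P : Fin 5 → Fin 4 → Prop} (h : ∀ t, ∃ i, P t i) :
    ∃ t t' : Fin 5, t ≠ t' ∧ ∃ i, P t i ∧ P t' i := by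
  choose f hf using h
  obtain ⟨t, t', hne, he⟩ := Fintype.exists_ne_map_eq_of_card_lt f (by simp)
  refine ⟨t, t', hne, f t, hf t, ?_⟩
  rw [he]
  exact hf t'

lemma branches (y00 y01 y10 y11 w0 w1 al be p10 p11 p20 p21 : ℝ)
    (hset : ∀ v0 v1 s : ℝ, TP y00 y01 y10 y11 (w0 + v0) (w1 + v1) s ↔
      (s = al + (v0 * p10 + v1 * p11) ∨ s = al - (v0 * p10 + v1 * p11) ∨
       s = be + (v0 * p20 + v1 * p21) ∨ s = be - (v0 * p20 + v1 * p21)))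
    (p q c : ℝ) (hu : p ^ 2 + q ^ 2 = 1)
    (he0 : y00 * p + y01 * q = c * p) (he1 : y10 * p + y11 * q = c * q) :
    (p = p10 ∧ q = p11 ∧ c + (w0 * p10 + w1 * p11) = al) ∨
    (p = -p10 ∧ q = -p11 ∧ c - (w0 * p10 + w1 * p11) = al) ∨
    (p = p20 ∧ q = p21 ∧ c + (w0 * p20 + w1 * p21) = be) ∨
    (p = -p20 ∧ q = -p21 ∧ c - (w0 * p20 + w1 * p21) = be) := by
  have hval : ∀ v0 v1 : ℝ,
      (c + ((w0 + v0) * p + (w1 + v1) * q) = al + (v0 * p10 + v1 * p11) ∨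
       c + ((w0 + v0) * p + (w1 + v1) * q) = al - (v0 * p10 + v1 * p11) ∨
       c + ((w0 + v0) * p + (w1 + v1) * q) = be + (v0 * p20 + v1 * p21) ∨
       c + ((w0 + v0) * p + (w1 + v1) * q) = be - (v0 * p20 + v1 * p21)) :=
    fun v0 v1 => (hset v0 v1 _).mp ⟨p, q, c, hu, he0, he1, rfl⟩
  have lvl1 : ∀ u0 u1 : ℝ,
      (u0 * p + u1 * q = u0 * p10 + u1 * p11 ∧ c + (w0 * p + w1 * q) = al) ∨
      (u0 * p + u1 * q = -(u0 * p10 + u1 * p11) ∧ c + (w0 * p + w1 * q) = al) ∨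
      (u0 * p + u1 * q = u0 * p20 + u1 * p21 ∧ c + (w0 * p + w1 * q) = be) ∨
      (u0 * p + u1 * q = -(u0 * p20 + u1 * p21) ∧ c + (w0 * p + w1 * q) = be) := by
    intro u0 u1
    have hD : ∀ t : Fin 5, ∃ i : Fin 4,
        c + ((w0 + (t.1 : ℝ) * u0) * p + (w1 + (t.1 : ℝ) * u1) * q)
          = ![al, al, be, be] i + (t.1 : ℝ) *
            ![u0 * p10 + u1 * p11, -(u0 * p10 + u1 * p11),
              u0 * p20 + u1 * p21, -(u0 * p20 + u1 * p21)] i := by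
      intro t
      rcases hval ((t.1 : ℝ) * u0) ((t.1 : ℝ) * u1) with h | h | h | h
      · exact ⟨0, by norm_num; linear_combination h⟩
      · exact ⟨1, by norm_num; linear_combination h⟩
      · exact ⟨2, by norm_num; linear_combination h⟩
      · exact ⟨3, by norm_num; linear_combination h⟩
    obtain ⟨t, t', hne, i, e1, e2⟩ := pigeon hD
    have hgt : (t.1 : ℝ) ≠ (t'.1 : ℝ) := by
      intro h; exact hne (Fin.ext (by exact_mod_cast h))
    have hslope : u0 * p + u1 * q =
        ![u0 * p10 + u1 * p11, -(u0 * p10 + u1 * p11),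
          u0 * p20 + u1 * p21, -(u0 * p20 + u1 * p21)] i := by
      have hz : ((t.1 : ℝ) - (t'.1 : ℝ)) * ((u0 * p + u1 * q) -
          ![u0 * p10 + u1 * p11, -(u0 * p10 + u1 * p11),
            u0 * p20 + u1 * p21, -(u0 * p20 + u1 * p21)] i) = 0 := by
        linear_combination e1 - e2
      rcases mul_eq_zero.mp hz with h | h
      · exact absurd (by linarith : (t.1 : ℝ) = (t'.1 : ℝ)) hgt
      · linarith
    have hconst : c + (w0 * p + w1 * q) = ![al, al, be, be] i := by
      linear_combination e1 - (t.1 : ℝ) * hslope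
    fin_cases i <;> norm_num at hslope hconst
    · exact Or.inl ⟨hslope, hconst⟩
    · exact Or.inr (Or.inl ⟨by linarith [hslope], hconst⟩)
    · exact Or.inr (Or.inr (Or.inl ⟨hslope, hconst⟩))
    · exact Or.inr (Or.inr (Or.inr ⟨by linarith [hslope], hconst⟩))
  have hD2 : ∀ t : Fin 5, ∃ i : Fin 4,
      (p + (t.1 : ℝ) * q = ![p10, -p10, p20, -p20] i + (t.1 : ℝ) * ![p11, -p11, p21, -p21] i) ∧
      (c + (w0 * p + w1 * q) = ![al, al, be, be] i) := by
    intro t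
    rcases lvl1 1 (t.1 : ℝ) with ⟨h1, h2⟩ | ⟨h1, h2⟩ | ⟨h1, h2⟩ | ⟨h1, h2⟩
    · exact ⟨0, by norm_num; linear_combination h1, by norm_num; exact h2⟩
    · exact ⟨1, by norm_num; linear_combination h1, by norm_num; exact h2⟩
    · exact ⟨2, by norm_num; linear_combination h1, by norm_num; exact h2⟩
    · exact ⟨3, by norm_num; linear_combination h1, by norm_num; exact h2⟩
  obtain ⟨t, t', hne, i, ⟨e1, e1c⟩, ⟨e2, _⟩⟩ := pigeon hD2
  have hgt : (t.1 : ℝ) ≠ (t'.1 : ℝ) := by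
    intro h; exact hne (Fin.ext (by exact_mod_cast h))
  have hqq : q = ![p11, -p11, p21, -p21] i := by
    have hz : ((t.1 : ℝ) - (t'.1 : ℝ)) * (q - ![p11, -p11, p21, -p21] i) = 0 := by
      linear_combination e1 - e2
    rcases mul_eq_zero.mp hz with h | h
    · exact absurd (by linarith : (t.1 : ℝ) = (t'.1 : ℝ)) hgt
    · linarith
  have hpp : p = ![p10, -p10, p20, -p20] i := by
    linear_combination e1 - (t.1 : ℝ) * hqq
  fin_cases i <;> norm_num at hpp hqq e1c
  · exact Or.inl ⟨hpp, hqq, by linear_combination e1c - w0 * hpp - w1 * hqq⟩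
  · exact Or.inr (Or.inl ⟨hpp, hqq, by linear_combination e1c - w0 * hpp - w1 * hqq⟩)
  · exact Or.inr (Or.inr (Or.inl ⟨hpp, hqq, by linear_combination e1c - w0 * hpp - w1 * hqq⟩))
  · exact Or.inr (Or.inr (Or.inr ⟨hpp, hqq, by linear_combination e1c - w0 * hpp - w1 * hqq⟩))

lemma claim (y00 y01 y10 y11 w0 w1 al be p10 p11 p20 p21 : ℝ)
    (hset : ∀ v0 v1 s : ℝ, TP y00 y01 y10 y11 (w0 + v0) (w1 + v1) s ↔
      (s = al + (v0 * p10 + v1 * p11) ∨ s = al - (v0 * p10 + v1 * p11) ∨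
       s = be + (v0 * p20 + v1 * p21) ∨ s = be - (v0 * p20 + v1 * p21)))
    (hp1 : p10 ^ 2 + p11 ^ 2 = 1) (hp2 : p20 ^ 2 + p21 ^ 2 = 1)
    (v10 v11 : ℝ) (hva : v10 * p10 + v11 * p11 ≠ 0)
    (hvb : al + (v10 * p10 + v11 * p11) ≠ be + (v10 * p20 + v11 * p21))
    (hvc : al + (v10 * p10 + v11 * p11) ≠ be - (v10 * p20 + v11 * p21))
    (w10 w11 : ℝ) (hwa : w10 * p20 + w11 * p21 ≠ 0)
    (hwb : be + (w10 * p20 + w11 * p21) ≠ al + (w10 * p10 + w11 * p11))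
    (hwc : be + (w10 * p20 + w11 * p21) ≠ al - (w10 * p10 + w11 * p11))
    (hne1 : ¬(p10 = p20 ∧ p11 = p21)) (hne2 : ¬(p10 = -p20 ∧ p11 = -p21)) :
    (y00 * p10 + y01 * p11 = al * p10 ∧ y10 * p10 + y11 * p11 = al * p11) ∧
    (y00 * p20 + y01 * p21 = be * p20 ∧ y10 * p20 + y11 * p21 = be * p21) ∧
    w0 * p10 + w1 * p11 = 0 ∧ w0 * p20 + w1 * p21 = 0 := by
  have part1 : (y00 * p10 + y01 * p11 = al * p10 ∧ y10 * p10 + y11 * p11 = al * p11) ∧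
      w0 * p10 + w1 * p11 = 0 := by
    obtain ⟨p, q, c, hu, he0, he1, hs⟩ :=
      (hset v10 v11 (al + (v10 * p10 + v11 * p11))).mpr (Or.inl rfl)
    rcases branches y00 y01 y10 y11 w0 w1 al be p10 p11 p20 p21 hset p q c hu he0 he1 with
      ⟨hp, hq, hc⟩ | ⟨hp, hq, hc⟩ | ⟨hp, hq, hc⟩ | ⟨hp, hq, hc⟩
    · -- good branch: p = p10
      have hu' : (-p10) ^ 2 + (-p11) ^ 2 = 1 := by linear_combination hp1
      have he0' : y00 * (-p10) + y01 * (-p11) = c * (-p10) := by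
        rw [← hp, ← hq]; linear_combination -he0
      have he1' : y10 * (-p10) + y11 * (-p11) = c * (-p11) := by
        rw [← hp, ← hq]; linear_combination -he1
      rcases branches y00 y01 y10 y11 w0 w1 al be p10 p11 p20 p21 hset (-p10) (-p11) c hu' he0' he1' with
        ⟨ha', hb', _⟩ | ⟨_, _, hc'⟩ | ⟨ha', hb', _⟩ | ⟨ha', hb', _⟩
      · exfalso
        have h10 : p10 = 0 := by linarith
        have h11 : p11 = 0 := by linarith
        rw [h10, h11] at hp1; norm_num at hp1
      · have hw : w0 * p10 + w1 * p11 = 0 := by linarith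
        have hcal : c = al := by linarith
        refine ⟨⟨?_, ?_⟩, hw⟩
        · rw [← hp, ← hq, ← hcal]; exact he0
        · rw [← hp, ← hq, ← hcal]; exact he1
      · exact absurd ⟨by linarith, by linarith⟩ hne2
      · exact absurd ⟨by linarith, by linarith⟩ hne1
    · exfalso
      apply hva
      have h1 : (w0 + v10) * p + (w1 + v11) * q
          = -((w0 * p10 + w1 * p11) + (v10 * p10 + v11 * p11)) := by rw [hp, hq]; ring
      linarith [hs, hc, h1]
    · exfalso
      apply hvb
      have h1 : (w0 + v10) * p + (w1 + v11) * q
          = (w0 * p20 + w1 * p21) + (v10 * p20 + v11 * p21) := by rw [hp, hq]; ring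
      linarith [hs, hc, h1]
    · exfalso
      apply hvc
      have h1 : (w0 + v10) * p + (w1 + v11) * q
          = -((w0 * p20 + w1 * p21) + (v10 * p20 + v11 * p21)) := by rw [hp, hq]; ring
      linarith [hs, hc, h1]
  have part2 : (y00 * p20 + y01 * p21 = be * p20 ∧ y10 * p20 + y11 * p21 = be * p21) ∧
      w0 * p20 + w1 * p21 = 0 := by
    obtain ⟨p, q, c, hu, he0, he1, hs⟩ :=
      (hset w10 w11 (be + (w10 * p20 + w11 * p21))).mpr (Or.inr (Or.inr (Or.inl rfl)))
    rcases branches y00 y01 y10 y11 w0 w1 al be p10 p11 p20 p21 hset p q c hu he0 he1 with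
      ⟨hp, hq, hc⟩ | ⟨hp, hq, hc⟩ | ⟨hp, hq, hc⟩ | ⟨hp, hq, hc⟩
    · exfalso
      apply hwb
      have h1 : (w0 + w10) * p + (w1 + w11) * q
          = (w0 * p10 + w1 * p11) + (w10 * p10 + w11 * p11) := by rw [hp, hq]; ring
      linarith [hs, hc, h1]
    · exfalso
      apply hwc
      have h1 : (w0 + w10) * p + (w1 + w11) * q
          = -((w0 * p10 + w1 * p11) + (w10 * p10 + w11 * p11)) := by rw [hp, hq]; ring
      linarith [hs, hc, h1]
    · -- good branch: p = p20
      have hu' : (-p20) ^ 2 + (-p21) ^ 2 = 1 := by linear_combination hp2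
      have he0' : y00 * (-p20) + y01 * (-p21) = c * (-p20) := by
        rw [← hp, ← hq]; linear_combination -he0
      have he1' : y10 * (-p20) + y11 * (-p21) = c * (-p21) := by
        rw [← hp, ← hq]; linear_combination -he1
      rcases branches y00 y01 y10 y11 w0 w1 al be p10 p11 p20 p21 hset (-p20) (-p21) c hu' he0' he1' with
        ⟨ha', hb', _⟩ | ⟨ha', hb', _⟩ | ⟨ha', hb', _⟩ | ⟨_, _, hc'⟩
      · exact absurd ⟨by linarith, by linarith⟩ hne2
      · exact absurd ⟨by linarith, by linarith⟩ hne1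
      · exfalso
        have h20 : p20 = 0 := by linarith
        have h21 : p21 = 0 := by linarith
        rw [h20, h21] at hp2; norm_num at hp2
      · have hw : w0 * p20 + w1 * p21 = 0 := by linarith
        have hcbe : c = be := by linarith
        refine ⟨⟨?_, ?_⟩, hw⟩
        · rw [← hp, ← hq, ← hcbe]; exact he0
        · rw [← hp, ← hq, ← hcbe]; exact he1
    · exfalso
      apply hwa
      have h1 : (w0 + w10) * p + (w1 + w11) * q
          = -((w0 * p20 + w1 * p21) + (w10 * p20 + w11 * p21)) := by rw [hp, hq]; ring
      linarith [hs, hc, h1]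
  exact ⟨part1.1, part2.1, part1.2, part2.2⟩

lemma sq_eq_one' {x : ℝ} (h : x ^ 2 = 1) : x = 1 ∨ x = -1 := by
  have h2 : (x - 1) * (x + 1) = 0 := by linear_combination h
  rcases mul_eq_zero.mp h2 with h' | h'
  · left; linarith
  · right; linarith

lemma classify1 (v0 v1 s : ℝ) : TP 1 0 0 0 v0 v1 s ↔
    (s = 1 + (v0 * 1 + v1 * 0) ∨ s = 1 - (v0 * 1 + v1 * 0) ∨
     s = 0 + (v0 * 0 + v1 * 1) ∨ s = 0 - (v0 * 0 + v1 * 1)) := by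
  constructor
  · rintro ⟨p, q, c, hu, he0, he1, hs⟩
    by_cases hc : c = 0
    · subst hc
      have hp0 : p = 0 := by linarith [he0]
      rcases sq_eq_one' (show q ^ 2 = 1 by nlinarith [hu]) with h | h
      · right; right; left; rw [hs, hp0, h] <;> ring_nf
      · right; right; right; rw [hs, hp0, h] <;> ring_nf
    · have hcq : c * q = 0 := by linarith [he1]
      have hq0 : q = 0 := (mul_eq_zero.mp hcq).resolve_left hc
      have hp2 : p ^ 2 = 1 := by nlinarith [hu]
      have hc1 : c = 1 := by
        have hfac : p * (1 - c) = 0 := by linear_combination he0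
        rcases mul_eq_zero.mp hfac with h' | h'
        · exfalso; rw [h'] at hp2; norm_num at hp2
        · linarith
      rcases sq_eq_one' hp2 with h | h
      · left; rw [hs, hq0, h, hc1] <;> ring_nf
      · right; left; rw [hs, hq0, h, hc1] <;> ring_nf
  · rintro (h | h | h | h)
    · exact ⟨1, 0, 1, by norm_num, by norm_num, by norm_num, by linear_combination h⟩
    · exact ⟨-1, 0, 1, by norm_num, by norm_num, by norm_num, by linear_combination h⟩
    · exact ⟨0, 1, 0, by norm_num, by norm_num, by norm_num, by linear_combination h⟩
    · exact ⟨0, -1, 0, by norm_num, by norm_num, by norm_num, by linear_combination h⟩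

lemma classify2 (v0 v1 s : ℝ) : TP 0 0 0 1 v0 v1 s ↔
    (s = 1 + (v0 * 0 + v1 * 1) ∨ s = 1 - (v0 * 0 + v1 * 1) ∨
     s = 0 + (v0 * 1 + v1 * 0) ∨ s = 0 - (v0 * 1 + v1 * 0)) := by
  constructor
  · rintro ⟨p, q, c, hu, he0, he1, hs⟩
    by_cases hc : c = 0
    · subst hc
      have hq0 : q = 0 := by linarith [he1]
      rcases sq_eq_one' (show p ^ 2 = 1 by nlinarith [hu]) with h | h
      · right; right; left; rw [hs, hq0, h] <;> ring_nf
      · right; right; right; rw [hs, hq0, h] <;> ring_nf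
    · have hcp : c * p = 0 := by linarith [he0]
      have hp0 : p = 0 := (mul_eq_zero.mp hcp).resolve_left hc
      have hq2 : q ^ 2 = 1 := by nlinarith [hu]
      have hc1 : c = 1 := by
        have hfac : q * (1 - c) = 0 := by linear_combination he1
        rcases mul_eq_zero.mp hfac with h' | h'
        · exfalso; rw [h'] at hq2; norm_num at hq2
        · linarith
      rcases sq_eq_one' hq2 with h | h
      · left; rw [hs, hp0, h, hc1] <;> ring_nf
      · right; left; rw [hs, hp0, h, hc1] <;> ring_nf
  · rintro (h | h | h | h)
    · exact ⟨0, 1, 1, by norm_num, by norm_num, by norm_num, by linear_combination h⟩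
    · exact ⟨0, -1, 1, by norm_num, by norm_num, by norm_num, by linear_combination h⟩
    · exact ⟨1, 0, 0, by norm_num, by norm_num, by norm_num, by linear_combination h⟩
    · exact ⟨-1, 0, 0, by norm_num, by norm_num, by norm_num, by linear_combination h⟩

lemma classify3 (v0 v1 s : ℝ) : TP 1 (-3/4) 0 0 v0 v1 s ↔
    (s = 1 + (v0 * 1 + v1 * 0) ∨ s = 1 - (v0 * 1 + v1 * 0) ∨
     s = 0 + (v0 * (3/5) + v1 * (4/5)) ∨ s = 0 - (v0 * (3/5) + v1 * (4/5))) := by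
  constructor
  · rintro ⟨p, q, c, hu, he0, he1, hs⟩
    by_cases hc : c = 0
    · subst hc
      have hp34 : p = 3/4 * q := by linarith [he0]
      have hq2 : q ^ 2 = (16:ℝ)/25 := by linear_combination (16/25) * hu - (16/25) * (p + 3/4*q) * hp34
      have hfac : (q - 4/5) * (q + 4/5) = 0 := by linear_combination hq2
      rcases mul_eq_zero.mp hfac with h' | h'
      · right; right; left
        have hq45 : q = 4/5 := by linarith
        rw [hs, hp34, hq45] <;> ring_nf
      · right; right; right
        have hq45 : q = -4/5 := by linarith
        rw [hs, hp34, hq45] <;> ring_nf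
    · have hcq : c * q = 0 := by linarith [he1]
      have hq0 : q = 0 := (mul_eq_zero.mp hcq).resolve_left hc
      have hp2 : p ^ 2 = 1 := by nlinarith [hu]
      have hc1 : c = 1 := by
        have hfac : p * (1 - c) = 0 := by linear_combination he0 + 3/4 * hq0 * 1
        rcases mul_eq_zero.mp hfac with h' | h'
        · exfalso; rw [h'] at hp2; norm_num at hp2
        · linarith
      rcases sq_eq_one' hp2 with h | h
      · left; rw [hs, hq0, h, hc1] <;> ring_nf
      · right; left; rw [hs, hq0, h, hc1] <;> ring_nf
  · rintro (h | h | h | h)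
    · exact ⟨1, 0, 1, by norm_num, by norm_num, by norm_num, by linear_combination h⟩
    · exact ⟨-1, 0, 1, by norm_num, by norm_num, by norm_num, by linear_combination h⟩
    · exact ⟨3/5, 4/5, 0, by norm_num, by norm_num, by norm_num, by linear_combination h⟩
    · exact ⟨-3/5, -4/5, 0, by norm_num, by norm_num, by norm_num, by linear_combination h⟩

lemma classify4 (v0 v1 s : ℝ) : TP 0 0 (-3/4) 1 v0 v1 s ↔
    (s = 1 + (v0 * 0 + v1 * 1) ∨ s = 1 - (v0 * 0 + v1 * 1) ∨
     s = 0 + (v0 * (4/5) + v1 * (3/5)) ∨ s = 0 - (v0 * (4/5) + v1 * (3/5))) := by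
  constructor
  · rintro ⟨p, q, c, hu, he0, he1, hs⟩
    by_cases hc : c = 0
    · subst hc
      have hq34 : q = 3/4 * p := by linarith [he1]
      have hp2 : p ^ 2 = (16:ℝ)/25 := by linear_combination (16/25) * hu - (16/25) * (q + 3/4*p) * hq34
      have hfac : (p - 4/5) * (p + 4/5) = 0 := by linear_combination hp2
      rcases mul_eq_zero.mp hfac with h' | h'
      · right; right; left
        have hp45 : p = 4/5 := by linarith
        rw [hs, hq34, hp45] <;> ring_nf
      · right; right; right
        have hp45 : p = -4/5 := by linarith
        rw [hs, hq34, hp45] <;> ring_nf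
    · have hcp : c * p = 0 := by linarith [he0]
      have hp0 : p = 0 := (mul_eq_zero.mp hcp).resolve_left hc
      have hq2 : q ^ 2 = 1 := by nlinarith [hu]
      have hc1 : c = 1 := by
        have hfac : q * (1 - c) = 0 := by linear_combination he1 + 3/4 * hp0
        rcases mul_eq_zero.mp hfac with h' | h'
        · exfalso; rw [h'] at hq2; norm_num at hq2
        · linarith
      rcases sq_eq_one' hq2 with h | h
      · left; rw [hs, hp0, h, hc1] <;> ring_nf
      · right; left; rw [hs, hp0, h, hc1] <;> ring_nf
  · rintro (h | h | h | h)
    · exact ⟨0, 1, 1, by norm_num, by norm_num, by norm_num, by linear_combination h⟩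
    · exact ⟨0, -1, 1, by norm_num, by norm_num, by norm_num, by linear_combination h⟩
    · exact ⟨4/5, 3/5, 0, by norm_num, by norm_num, by norm_num, by linear_combination h⟩
    · exact ⟨-4/5, -3/5, 0, by norm_num, by norm_num, by norm_num, by linear_combination h⟩

def CR (Q : M2) : M3 := blk Q 0 0 1

lemma CR_eq (Q : M2) : CR Q = !![Q 0 0, Q 0 1, 0; Q 1 0, Q 1 1, 0; 0, 0, 1] := by
  ext i j
  fin_cases i <;> fin_cases j <;> simp [CR, blk, Fin.snoc] <;> rfl

lemma CR_mul (A B : M2) : CR A * CR B = CR (A * B) := by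
  rw [CR_eq, CR_eq, CR_eq]
  ext i j
  fin_cases i <;> fin_cases j <;>
    simp [Matrix.mul_apply, Fin.sum_univ_three, Fin.sum_univ_two] <;> try rfl

lemma CR_one : CR 1 = 1 := by
  rw [CR_eq]
  ext i j
  fin_cases i <;> fin_cases j <;> simp [Matrix.one_apply, Matrix.vecHead, Matrix.vecTail]

lemma CR_transpose (Q : M2) : (CR Q)ᵀ = CR Qᵀ := by
  rw [CR_eq, CR_eq]
  ext i j
  fin_cases i <;> fin_cases j <;> simp [Matrix.vecHead, Matrix.vecTail]

lemma CR_mulVec (A : M2) (x : Fin 3 → ℝ) :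
    CR A *ᵥ x = ![A 0 0 * x 0 + A 0 1 * x 1, A 1 0 * x 0 + A 1 1 * x 1, x 2] := by
  funext i
  rw [mulVec3, CR_eq]
  fin_cases i <;> norm_num

lemma row_entries (Q : M2) (h2 : Q * Qᵀ = 1) :
    (Q 0 0 ^ 2 + Q 0 1 ^ 2 = 1) ∧ (Q 1 0 ^ 2 + Q 1 1 ^ 2 = 1) ∧
    (Q 0 0 * Q 1 0 + Q 0 1 * Q 1 1 = 0) := by
  have r00 : (Q * Qᵀ) 0 0 = (1 : M2) 0 0 := by rw [h2]
  have r01 : (Q * Qᵀ) 0 1 = (1 : M2) 0 1 := by rw [h2]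
  have r11 : (Q * Qᵀ) 1 1 = (1 : M2) 1 1 := by rw [h2]
  simp [Matrix.mul_apply, Fin.sum_univ_two, Matrix.one_apply] at r00 r01 r11
  refine ⟨by nlinarith [r00], by nlinarith [r11], by nlinarith [r01]⟩

lemma conj_mem (Q : M2) (h1 : Qᵀ * Q = 1) (h2 : Q * Qᵀ = 1) (M : M3) (l : ℝ)
    (hm : l ∈ sigmaL M) : l ∈ sigmaL (CR Qᵀ * M * CR Q) := by
  obtain ⟨qr0, qr1, qrow⟩ := row_entries Q h2
  have iso : ∀ z w : Fin 3 → ℝ,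
      (Q 0 0 * z 0 + Q 1 0 * z 1) * (Q 0 0 * w 0 + Q 1 0 * w 1) +
      (Q 0 1 * z 0 + Q 1 1 * z 1) * (Q 0 1 * w 0 + Q 1 1 * w 1) = z 0 * w 0 + z 1 * w 1 := by
    intro z w
    linear_combination (z 0 * w 0) * qr0 + (z 1 * w 1) * qr1 + (z 0 * w 1 + z 1 * w 0) * qrow
  have hcomp : ∀ z : Fin 3 → ℝ,
      (CR Qᵀ *ᵥ z) 0 = Q 0 0 * z 0 + Q 1 0 * z 1 ∧
      (CR Qᵀ *ᵥ z) 1 = Q 0 1 * z 0 + Q 1 1 * z 1 ∧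
      (CR Qᵀ *ᵥ z) 2 = z 2 := by
    intro z
    rw [CR_mulVec]
    norm_num
  have cone_pres : ∀ z : Fin 3 → ℝ, z ∈ lorentzCone 2 → (CR Qᵀ *ᵥ z) ∈ lorentzCone 2 := by
    intro z hz
    rw [memK_iff] at hz ⊢
    obtain ⟨e0, e1, e2⟩ := hcomp z
    rw [e0, e1, e2]
    exact ⟨hz.1, by rw [show (Q 0 0 * z 0 + Q 1 0 * z 1) ^ 2 + (Q 0 1 * z 0 + Q 1 1 * z 1) ^ 2
      = z 0 ^ 2 + z 1 ^ 2 by linear_combination iso z z]; exact hz.2⟩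
  have dot_pres : ∀ z w : Fin 3 → ℝ, (CR Qᵀ *ᵥ z) ⬝ᵥ (CR Qᵀ *ᵥ w) = z ⬝ᵥ w := by
    intro z w
    rw [dot3, dot3]
    obtain ⟨e0, e1, e2⟩ := hcomp z
    obtain ⟨f0, f1, f2⟩ := hcomp w
    rw [e0, e1, e2, f0, f1, f2]
    linear_combination iso z w
  obtain ⟨x, hx0, hxK, hyK, hdot⟩ := hm
  have hQQ : CR Q * CR Qᵀ = 1 := by rw [CR_mul, h2, CR_one]
  have hyy : (CR Qᵀ * M * CR Q - l • 1) *ᵥ (CR Qᵀ *ᵥ x) = CR Qᵀ *ᵥ ((M - l • 1) *ᵥ x) := by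
    rw [sub_smul_one_mulVec, Matrix.mulVec_mulVec,
      Matrix.mul_assoc (CR Qᵀ * M) (CR Q) (CR Qᵀ), hQQ, mul_one,
      sub_smul_one_mulVec, Matrix.mulVec_sub]
    congr 1
    · rw [← Matrix.mulVec_mulVec]
    · rw [Matrix.mulVec_smul]
  refine ⟨CR Qᵀ *ᵥ x, ?_, cone_pres x hxK, ?_, ?_⟩
  · intro h0
    apply hx0
    have hxx : CR Q *ᵥ (CR Qᵀ *ᵥ x) = x := by
      rw [Matrix.mulVec_mulVec, hQQ, Matrix.one_mulVec]
    rw [h0, Matrix.mulVec_zero] at hxx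
    exact hxx.symm
  · rw [hyy]
    exact cone_pres _ hyK
  · rw [hyy, dot_pres]
    exact hdot

lemma conj_sigma (Q : M2) (h1 : Qᵀ * Q = 1) (M : M3) :
    sigmaL (CR Qᵀ * M * CR Q) = sigmaL M := by
  have h2 : Q * Qᵀ = 1 := by rwa [mul_eq_one_comm] at h1
  apply Set.eq_of_subset_of_subset
  · intro l hl
    have h1' : Qᵀᵀ * Qᵀ = 1 := by rwa [Matrix.transpose_transpose]
    have h2' : Qᵀ * Qᵀᵀ = 1 := by rwa [Matrix.transpose_transpose]
    have := conj_mem Qᵀ h1' h2' (CR Qᵀ * M * CR Q) l hl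
    rw [Matrix.transpose_transpose] at this
    have hQQ : CR Q * CR Qᵀ = 1 := by rw [CR_mul, h2, CR_one]
    have heq : CR Q * (CR Qᵀ * M * CR Q) * CR Qᵀ = M := by
      have e : CR Q * (CR Qᵀ * M * CR Q) * CR Qᵀ
          = (CR Q * CR Qᵀ) * M * (CR Q * CR Qᵀ) := by noncomm_ring
      rw [e, hQQ, one_mul, mul_one]
    rwa [heq] at this
  · intro l hl
    exact conj_mem Q h1 h2 M l hl

lemma conj_blk00 (Q : M2) (h1 : Qᵀ * Q = 1) (v : Fin 2 → ℝ) (a : ℝ) :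
    CR Qᵀ * blk 0 0 (Q *ᵥ v) a * CR Q = blk 0 0 v a := by
  have c00 : (Qᵀ * Q) 0 0 = (1 : M2) 0 0 := by rw [h1]
  have c01 : (Qᵀ * Q) 0 1 = (1 : M2) 0 1 := by rw [h1]
  have c10 : (Qᵀ * Q) 1 0 = (1 : M2) 1 0 := by rw [h1]
  have c11 : (Qᵀ * Q) 1 1 = (1 : M2) 1 1 := by rw [h1]
  simp [Matrix.mul_apply, Fin.sum_univ_two, Matrix.one_apply] at c00 c01 c10 c11
  rw [CR_eq, CR_eq, blk_eq, blk_eq]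
  have hv : ∀ i : Fin 2, (Q *ᵥ v) i = Q i 0 * v 0 + Q i 1 * v 1 := by
    intro i
    simp [Matrix.mulVec, dotProduct, Fin.sum_univ_two]
  ext i j
  fin_cases i <;> fin_cases j <;>
    simp [Matrix.mul_apply, Fin.sum_univ_three, hv, Matrix.vecHead, Matrix.vecTail] <;>
    first
      | linear_combination v 0 * c00 + v 1 * c10
      | linear_combination v 0 * c01 + v 1 * c11

lemma CR_blk (Q : M2) (X : M2) :
    CR Q * blk X 0 0 0 * CR Qᵀ = blk (Q * X * Qᵀ) 0 0 0 := by
  rw [CR_eq, CR_eq, blk_eq, blk_eq]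
  have hx : ∀ i j : Fin 2, (Q * X * Qᵀ) i j =
      (Q i 0 * X 0 0 + Q i 1 * X 1 0) * Q j 0 + (Q i 0 * X 0 1 + Q i 1 * X 1 1) * Q j 1 := by
    intro i j
    simp [Matrix.mul_apply, Fin.sum_univ_two]
    try ring
  ext i j
  fin_cases i <;> fin_cases j <;>
    simp [Matrix.mul_apply, Fin.sum_univ_three, hx, Matrix.vecHead, Matrix.vecTail] <;>
    try ring

theorem D_is_plus_minus_one
    (φ : Matrix (Fin 3) (Fin 3) ℝ →ₗ[ℝ] Matrix (Fin 3) (Fin 3) ℝ)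
    (hφ : ∀ A, sigmaL (φ A) = sigmaL A)
    (Q : Matrix (Fin 2) (Fin 2) ℝ) (hQ : Qᵀ * Q = 1)
    (hQφ : ∀ (v : Fin 2 → ℝ) (a : ℝ), φ (blk 0 0 v a) = blk 0 0 (Q *ᵥ v) a) :
    ∃ D : Matrix (Fin 2) (Fin 2) ℝ,
      (D = 1 ∨ D = Matrix.diagonal ![1, -1]) ∧
      ∀ At : Matrix (Fin 2) (Fin 2) ℝ,
        φ (blk At 0 0 0) = blk (Q * D * At * D⁻¹ * Qᵀ) 0 0 0 := by
  classical
  have hQ2 : Q * Qᵀ = 1 := by rwa [mul_eq_one_comm] at hQ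
  have hQQ' : CR Q * CR Qᵀ = 1 := by rw [CR_mul, hQ2, CR_one]
  set φ' : M3 → M3 := fun A => CR Qᵀ * φ A * CR Q with hdefφ'
  have P1 : ∀ A, sigmaL (φ' A) = sigmaL A := fun A => (conj_sigma Q hQ (φ A)).trans (hφ A)
  have P2 : ∀ (v : Fin 2 → ℝ) (a : ℝ), φ' (blk 0 0 v a) = blk 0 0 v a := by
    intro v a
    show CR Qᵀ * φ (blk 0 0 v a) * CR Q = _
    rw [hQφ]
    exact conj_blk00 Q hQ v a
  have blk_split : ∀ (X : M2) (v : Fin 2 → ℝ) (a : ℝ),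
      blk X 0 0 0 + blk 0 0 v a = blk X 0 v a := by
    intro X v a
    rw [blk_eq, blk_eq, blk_eq]
    ext i j
    fin_cases i <;> fin_cases j <;> simp [Matrix.vecHead, Matrix.vecTail]
  have H : ∀ (T : M2) (v0 v1 a : ℝ),
      sigmaL (φ' (blk T 0 0 0) + blk 0 0 ![v0, v1] a) = sigmaL (blk T 0 ![v0, v1] a) := by
    intro T v0 v1 a
    have e1 : φ' (blk T 0 0 0) + blk 0 0 ![v0, v1] a = φ' (blk T 0 ![v0, v1] a) := by
      rw [← blk_split T ![v0, v1] a]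
      conv_lhs => rw [← P2 ![v0, v1] a]
      show CR Qᵀ * φ (blk T 0 0 0) * CR Q + CR Qᵀ * φ (blk 0 0 ![v0, v1] a) * CR Q
        = CR Qᵀ * φ (blk T 0 0 0 + blk 0 0 ![v0, v1] a) * CR Q
      rw [map_add, Matrix.mul_add, Matrix.add_mul]
    rw [e1, P1]
  have Hmem : ∀ (T : M2) (v0 v1 a : ℝ),
      a ∈ sigmaL (φ' (blk T 0 0 0) + blk 0 0 ![v0, v1] a) := by
    intro T v0 v1 a
    rw [H]
    exact a_mem_known T ![v0, v1] a
  -- Test 1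
  have W1done : φ' (blk !![1,0;0,0] 0 0 0) = blk !![1,0;0,0] 0 0 0 := by
    set W := φ' (blk !![1,0;0,0] 0 0 0) with hW
    obtain ⟨z02, z12, z22⟩ := step1 W (fun v0 v1 a => Hmem !![1,0;0,0] v0 v1 a)
    have hstar := star W !![1,0;0,0] z02 z12 z22 (fun v0 v1 a => H !![1,0;0,0] v0 v1 a)
    have hset : ∀ v0 v1 s : ℝ,
        TP (W 0 0) (W 0 1) (W 1 0) (W 1 1) (W 2 0 + v0) (W 2 1 + v1) s ↔
        (s = 1 + (v0 * 1 + v1 * 0) ∨ s = 1 - (v0 * 1 + v1 * 0) ∨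
         s = 0 + (v0 * 0 + v1 * 1) ∨ s = 0 - (v0 * 0 + v1 * 1)) := by
      intro v0 v1 s
      rw [← hstar v0 v1 s]
      exact classify1 v0 v1 s
    obtain ⟨⟨e1, e2⟩, ⟨e3, e4⟩, e5, e6⟩ :=
      claim (W 0 0) (W 0 1) (W 1 0) (W 1 1) (W 2 0) (W 2 1) 1 0 1 0 0 1 hset
        (by norm_num) (by norm_num) 3 0 (by norm_num) (by norm_num) (by norm_num)
        0 3 (by norm_num) (by norm_num) (by norm_num) (by norm_num) (by norm_num)
    rw [blk_eq]
    ext i j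
    fin_cases i <;> fin_cases j <;>
      simp [Matrix.vecHead, Matrix.vecTail] <;>
      linarith [e1, e2, e3, e4, e5, e6, z02, z12, z22]
  -- Test 2
  have W2done : φ' (blk !![0,0;0,1] 0 0 0) = blk !![0,0;0,1] 0 0 0 := by
    set W := φ' (blk !![0,0;0,1] 0 0 0) with hW
    obtain ⟨z02, z12, z22⟩ := step1 W (fun v0 v1 a => Hmem !![0,0;0,1] v0 v1 a)
    have hstar := star W !![0,0;0,1] z02 z12 z22 (fun v0 v1 a => H !![0,0;0,1] v0 v1 a)
    have hset : ∀ v0 v1 s : ℝ,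
        TP (W 0 0) (W 0 1) (W 1 0) (W 1 1) (W 2 0 + v0) (W 2 1 + v1) s ↔
        (s = 1 + (v0 * 0 + v1 * 1) ∨ s = 1 - (v0 * 0 + v1 * 1) ∨
         s = 0 + (v0 * 1 + v1 * 0) ∨ s = 0 - (v0 * 1 + v1 * 0)) := by
      intro v0 v1 s
      rw [← hstar v0 v1 s]
      exact classify2 v0 v1 s
    obtain ⟨⟨e1, e2⟩, ⟨e3, e4⟩, e5, e6⟩ :=
      claim (W 0 0) (W 0 1) (W 1 0) (W 1 1) (W 2 0) (W 2 1) 1 0 0 1 1 0 hset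
        (by norm_num) (by norm_num) 0 3 (by norm_num) (by norm_num) (by norm_num)
        3 0 (by norm_num) (by norm_num) (by norm_num) (by norm_num) (by norm_num)
    rw [blk_eq]
    ext i j
    fin_cases i <;> fin_cases j <;>
      simp [Matrix.vecHead, Matrix.vecTail] <;>
      linarith [e1, e2, e3, e4, e5, e6, z02, z12, z22]
  -- Test 3
  have W3done : φ' (blk !![1,-3/4;0,0] 0 0 0) = blk !![1,-3/4;0,0] 0 0 0 := by
    set W := φ' (blk !![1,-3/4;0,0] 0 0 0) with hW
    obtain ⟨z02, z12, z22⟩ := step1 W (fun v0 v1 a => Hmem !![1,-3/4;0,0] v0 v1 a)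
    have hstar := star W !![1,-3/4;0,0] z02 z12 z22 (fun v0 v1 a => H !![1,-3/4;0,0] v0 v1 a)
    have hset : ∀ v0 v1 s : ℝ,
        TP (W 0 0) (W 0 1) (W 1 0) (W 1 1) (W 2 0 + v0) (W 2 1 + v1) s ↔
        (s = 1 + (v0 * 1 + v1 * 0) ∨ s = 1 - (v0 * 1 + v1 * 0) ∨
         s = 0 + (v0 * (3/5) + v1 * (4/5)) ∨ s = 0 - (v0 * (3/5) + v1 * (4/5))) := by
      intro v0 v1 s
      rw [← hstar v0 v1 s]
      exact classify3 v0 v1 s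
    obtain ⟨⟨e1, e2⟩, ⟨e3, e4⟩, e5, e6⟩ :=
      claim (W 0 0) (W 0 1) (W 1 0) (W 1 1) (W 2 0) (W 2 1) 1 0 1 0 (3/5) (4/5) hset
        (by norm_num) (by norm_num) 3 0 (by norm_num) (by norm_num) (by norm_num)
        0 5 (by norm_num) (by norm_num) (by norm_num) (by norm_num) (by norm_num)
    rw [blk_eq]
    ext i j
    fin_cases i <;> fin_cases j <;>
      simp [Matrix.vecHead, Matrix.vecTail] <;>
      linarith [e1, e2, e3, e4, e5, e6, z02, z12, z22]
  -- Test 4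
  have W4done : φ' (blk !![0,0;-3/4,1] 0 0 0) = blk !![0,0;-3/4,1] 0 0 0 := by
    set W := φ' (blk !![0,0;-3/4,1] 0 0 0) with hW
    obtain ⟨z02, z12, z22⟩ := step1 W (fun v0 v1 a => Hmem !![0,0;-3/4,1] v0 v1 a)
    have hstar := star W !![0,0;-3/4,1] z02 z12 z22 (fun v0 v1 a => H !![0,0;-3/4,1] v0 v1 a)
    have hset : ∀ v0 v1 s : ℝ,
        TP (W 0 0) (W 0 1) (W 1 0) (W 1 1) (W 2 0 + v0) (W 2 1 + v1) s ↔
        (s = 1 + (v0 * 0 + v1 * 1) ∨ s = 1 - (v0 * 0 + v1 * 1) ∨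
         s = 0 + (v0 * (4/5) + v1 * (3/5)) ∨ s = 0 - (v0 * (4/5) + v1 * (3/5))) := by
      intro v0 v1 s
      rw [← hstar v0 v1 s]
      exact classify4 v0 v1 s
    obtain ⟨⟨e1, e2⟩, ⟨e3, e4⟩, e5, e6⟩ :=
      claim (W 0 0) (W 0 1) (W 1 0) (W 1 1) (W 2 0) (W 2 1) 1 0 0 1 (4/5) (3/5) hset
        (by norm_num) (by norm_num) 0 3 (by norm_num) (by norm_num) (by norm_num)
        5 0 (by norm_num) (by norm_num) (by norm_num) (by norm_num) (by norm_num)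
    rw [blk_eq]
    ext i j
    fin_cases i <;> fin_cases j <;>
      simp [Matrix.vecHead, Matrix.vecTail] <;>
      linarith [e1, e2, e3, e4, e5, e6, z02, z12, z22]
  -- linearity of φ'
  have philin : ∀ (c : ℝ) (A B : M3), φ' (c • A + B) = c • φ' A + φ' B := by
    intro c A B
    show CR Qᵀ * φ (c • A + B) * CR Q = c • (CR Qᵀ * φ A * CR Q) + CR Qᵀ * φ B * CR Q
    rw [map_add, φ.map_smul, Matrix.mul_add, Matrix.add_mul, Matrix.mul_smul, Matrix.smul_mul]
  have philin2 : ∀ (c : ℝ) (A : M3), φ' (c • A) = c • φ' A := by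
    intro c A
    show CR Qᵀ * φ (c • A) * CR Q = c • (CR Qᵀ * φ A * CR Q)
    rw [φ.map_smul, Matrix.mul_smul, Matrix.smul_mul]
  -- conclusion
  refine ⟨1, Or.inl rfl, ?_⟩
  intro At
  have decomp : blk At 0 0 0
      = (At 0 0 + (4/3) * At 0 1) • blk !![1,0;0,0] 0 0 0
        + ((At 1 1 + (4/3) * At 1 0) • blk !![0,0;0,1] 0 0 0
        + ((-(4/3) * At 0 1) • blk !![1,-3/4;0,0] 0 0 0
        + (-(4/3) * At 1 0) • blk !![0,0;-3/4,1] 0 0 0)) := by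
    rw [blk_eq, blk_eq, blk_eq, blk_eq, blk_eq]
    ext i j
    fin_cases i <;> fin_cases j <;>
      simp [Matrix.vecHead, Matrix.vecTail] <;> ring
  have hφ'At : φ' (blk At 0 0 0) = blk At 0 0 0 := by
    rw [decomp, philin, philin, philin, philin2, W1done, W2done, W3done, W4done]
  have hback : CR Q * φ' (blk At 0 0 0) * CR Qᵀ = φ (blk At 0 0 0) := by
    show CR Q * (CR Qᵀ * φ (blk At 0 0 0) * CR Q) * CR Qᵀ = φ (blk At 0 0 0)
    have e : CR Q * (CR Qᵀ * φ (blk At 0 0 0) * CR Q) * CR Qᵀ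
        = (CR Q * CR Qᵀ) * φ (blk At 0 0 0) * (CR Q * CR Qᵀ) := by noncomm_ring
    rw [e, hQQ', one_mul, mul_one]
  have hfin : φ (blk At 0 0 0) = blk (Q * At * Qᵀ) 0 0 0 := by
    rw [← hback, hφ'At, CR_blk]
  rw [hfin]
  have : Q * (1 : M2) * At * (1 : M2)⁻¹ * Qᵀ = Q * At * Qᵀ := by
    rw [mul_one, inv_one, mul_one]
  rw [this]
end
end

section
/- Let φ : M₃ → M₃ be a linear preserver of the Lorentz spectrum with associated orthogonal matrix Q, and suppose B̃₁, B̃₂ ∈ M₂ satisfy φ([0 (Qᵀe₁); 0ᵀ 0]) = [B̃₁ e₁; 0ᵀ 0] and φ([0 (Qᵀe₂); 0ᵀ 0]) = [B̃₂ e₂; 0ᵀ 0], where e₁, e₂ are the standard basis vectors of ℝ². Then there exist x, y ∈ ℝ such that B̃₁ = [0 x; 0 y] (first column zero, second column (x, y)) and B̃₂ = [−x 0; −y 0] (first column (−x, −y), second column zero). -/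
open Matrix

noncomputable section

lemma resolvent_apply (A : Matrix (Fin 3) (Fin 3) ℝ) (l : ℝ) (x : Fin 3 → ℝ) :
    (A - l • 1) *ᵥ x = A *ᵥ x - l • x := by
  rw [Matrix.sub_mulVec, Matrix.smul_mulVec, Matrix.one_mulVec]

lemma enorm_pair (p q : ℝ) : eucNorm ![p, q] = Real.sqrt (p^2 + q^2) := by
  simp [eucNorm, Fin.sum_univ_two]

lemma restrict3 (x : Fin 3 → ℝ) : (fun i : Fin 2 => x i.castSucc) = ![x 0, x 1] := by
  funext i; fin_cases i <;> rfl

lemma memcone_iff (x : Fin 3 → ℝ) :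
    x ∈ lorentzCone 2 ↔ (x 0)^2 + (x 1)^2 ≤ (x 2)^2 ∧ 0 ≤ x 2 := by
  unfold lorentzCone
  rw [Set.mem_setOf_eq, restrict3, enorm_pair]
  show Real.sqrt _ ≤ x 2 ↔ _
  constructor
  · intro h
    have h0 : (0:ℝ) ≤ x 2 := le_trans (Real.sqrt_nonneg _) h
    refine ⟨?_, h0⟩
    have := pow_le_pow_left₀ (Real.sqrt_nonneg _) h 2
    rwa [Real.sq_sqrt (by positivity)] at this
  · rintro ⟨h1, h2⟩
    calc Real.sqrt ((x 0)^2 + (x 1)^2) ≤ Real.sqrt ((x 2)^2) := Real.sqrt_le_sqrt h1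
    _ = x 2 := Real.sqrt_sq h2

lemma lemB (M : Matrix (Fin 2) (Fin 2) ℝ) (u v : Fin 2 → ℝ) (aa l m Z1 Z2 : ℝ)
    (hZ : Z1^2 + Z2^2 = 1) (hm : 0 ≤ m)
    (h1 : M 0 0 * Z1 + M 0 1 * Z2 + u 0 = (l - m) * Z1)
    (h2 : M 1 0 * Z1 + M 1 1 * Z2 + u 1 = (l - m) * Z2)
    (h3 : v 0 * Z1 + v 1 * Z2 + aa - l = m) :
    l ∈ sigmaL (blk M u v aa) := by
  refine ⟨![Z1, Z2, 1], ?_, ?_, ?_, ?_⟩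
  · intro h
    have := congr_fun h 2
    simp at this
  · rw [memcone_iff]; show Z1^2 + Z2^2 ≤ (1:ℝ)^2 ∧ (0:ℝ) ≤ 1; norm_num [hZ]
  · rw [resolvent_apply]
    have hy : blk M u v aa *ᵥ ![Z1, Z2, 1] - l • ![Z1, Z2, 1] = ![-m*Z1, -m*Z2, m] := by
      funext i
      rw [blk_eq]
      fin_cases i <;>
        simp [Matrix.mulVec, dotProduct, Fin.sum_univ_three] <;> linarith
    rw [hy, memcone_iff]
    constructor
    · show (-m*Z1)^2 + (-m*Z2)^2 ≤ m^2
      nlinarith [sq_nonneg m]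
    · exact hm
  · rw [resolvent_apply]
    have hy : blk M u v aa *ᵥ ![Z1, Z2, 1] - l • ![Z1, Z2, 1] = ![-m*Z1, -m*Z2, m] := by
      funext i
      rw [blk_eq]
      fin_cases i <;>
        simp [Matrix.mulVec, dotProduct, Fin.sum_univ_three] <;> linarith
    rw [hy]
    have : (![Z1, Z2, 1] : Fin 3 → ℝ) ⬝ᵥ ![-m*Z1, -m*Z2, m]
        = Z1 * (-m*Z1) + (Z2 * (-m*Z2) + 1 * m) := by
      simp [dotProduct, Fin.sum_univ_three]; ring
    rw [this]
    nlinarith [hZ]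


lemma lemA_scalar (w0 w1 v0 v1 aa l p q t : ℝ)
    (hxle : p^2 + q^2 ≤ t^2) (hxt : 0 ≤ t) (hx0 : ¬(p = 0 ∧ q = 0 ∧ t = 0))
    (hyle : (w0*t - l*p)^2 + (w1*t - l*q)^2 ≤ (v0*p + v1*q + aa*t - l*t)^2)
    (hy3 : 0 ≤ v0*p + v1*q + aa*t - l*t)
    (hdot : p*(w0*t - l*p) + q*(w1*t - l*q) + t*(v0*p + v1*q + aa*t - l*t) = 0) :
    (∃ m, 0 ≤ m ∧ (l - m)^2 = w0^2 + w1^2 ∧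
      v0 * w0 + v1 * w1 = (l + m - aa) * (l - m)) ∨
    (l^2 - aa*l - (v0 * w0 + v1 * w1) = 0 ∧ w0^2 + w1^2 < l^2) := by
  obtain ⟨y1, hy1d⟩ : ∃ y, w0*t - l*p = y := ⟨_, rfl⟩
  obtain ⟨y2, hy2d⟩ : ∃ y, w1*t - l*q = y := ⟨_, rfl⟩
  obtain ⟨y3, hy3d⟩ : ∃ y, v0*p + v1*q + aa*t - l*t = y := ⟨_, rfl⟩
  rw [hy1d, hy2d, hy3d] at hyle
  rw [hy3d] at hy3
  rw [hy1d, hy2d, hy3d] at hdot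
  have htpos : 0 < t := by
    rcases lt_or_eq_of_le hxt with h' | h'
    · exact h'
    · exfalso; exact hx0 ⟨by nlinarith, by nlinarith, h'.symm⟩
  have ht2 : (0:ℝ) < t^2 := by positivity
  have hsum : p*y1 + q*y2 = -(t*y3) := by linarith
  have hcs : (p*y1 + q*y2)^2 + (p*y2 - q*y1)^2 = (p^2+q^2)*(y1^2+y2^2) := by ring
  rcases lt_or_eq_of_le hxle with hin | hbd
  · -- interior case
    have hsq : (p*y1 + q*y2)^2 = t^2*y3^2 := by rw [hsum]; ring
    have h1 : t^2*y3^2 ≤ (p^2+q^2)*(y1^2+y2^2) := by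
      linarith [sq_nonneg (p*y2 - q*y1), hcs, hsq]
    have h2 : (p^2+q^2)*(y1^2+y2^2) ≤ (p^2+q^2)*y3^2 :=
      mul_le_mul_of_nonneg_left hyle (by positivity)
    have hy3sq : y3^2 ≤ 0 := by nlinarith [h1, h2]
    have hy3sq0 : y3^2 = 0 := le_antisymm hy3sq (sq_nonneg y3)
    have hy30 : y3 = 0 := by
      exact pow_eq_zero_iff (two_ne_zero).elim |>.mp hy3sq0
    rw [hy30] at hyle
    have hy10 : y1 = 0 := by
      have h5 : y1^2 = 0 := le_antisymm (by nlinarith [sq_nonneg y2]) (sq_nonneg y1)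
      exact pow_eq_zero_iff (two_ne_zero).elim |>.mp h5
    have hy20 : y2 = 0 := by
      have h5 : y2^2 = 0 := le_antisymm (by nlinarith [sq_nonneg y1]) (sq_nonneg y2)
      exact pow_eq_zero_iff (two_ne_zero).elim |>.mp h5
    have e1 : w0 * t = l * p := by rw [hy10] at hy1d; linarith [hy1d]
    have e2 : w1 * t = l * q := by rw [hy20] at hy2d; linarith [hy2d]
    have e3 : v0*p + v1*q + aa*t - l*t = 0 := by rw [hy3d]; exact hy30
    by_cases hl : l = 0
    · subst hl
      have hw0 : w0 = 0 := by
        have : w0 * t = 0 := by linarith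
        exact (mul_eq_zero.mp this).resolve_right (ne_of_gt htpos)
      have hw1 : w1 = 0 := by
        have : w1 * t = 0 := by linarith
        exact (mul_eq_zero.mp this).resolve_right (ne_of_gt htpos)
      left; exact ⟨0, le_refl _, by rw [hw0, hw1]; ring, by rw [hw0, hw1]; ring⟩
    · right
      constructor
      · have key : t * (l^2 - aa*l - (v0*w0 + v1*w1)) = 0 := by
          linear_combination (-v0) * e1 - v1 * e2 - l * e3
        exact (mul_eq_zero.mp key).resolve_left (ne_of_gt htpos)
      · have hl2 : 0 < l^2 := by positivity
        have hnn : (w0^2 + w1^2) * t^2 = l^2 * (p^2+q^2) := by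
          linear_combination (w0*t + l*p) * e1 + (w1*t + l*q) * e2
        have h6 : l^2*(p^2+q^2) < l^2*t^2 := mul_lt_mul_of_pos_left hin hl2
        have h7 : (w0^2+w1^2)*t^2 < l^2*t^2 := by linarith [hnn]
        exact lt_of_mul_lt_mul_right h7 (le_of_lt ht2)
  · -- boundary case
    have h1 : t^2*y3^2 + (p*y2 - q*y1)^2 = t^2*(y1^2+y2^2) := by
      linear_combination hcs + (y1^2+y2^2)*hbd + (t*y3 - (p*y1+q*y2))*hsum
    have hX : (p*y2 - q*y1)^2 ≤ 0 := by nlinarith [h1, hyle, ht2]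
    have hpe : p*y2 - q*y1 = 0 := by
      have h5 : (p*y2 - q*y1)^2 = 0 := le_antisymm hX (sq_nonneg _)
      exact pow_eq_zero_iff (two_ne_zero).elim |>.mp h5
    have e1' : t*(t*y1) = t*(-(p*y3)) := by
      linear_combination p*hsum - q*hpe - y1*hbd
    have e1 : t*y1 = -(p*y3) := mul_left_cancel₀ (ne_of_gt htpos) e1'
    have e2' : t*(t*y2) = t*(-(q*y3)) := by
      linear_combination q*hsum + p*hpe - y2*hbd
    have e2 : t*y2 = -(q*y3) := mul_left_cancel₀ (ne_of_gt htpos) e2'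
    set m := y3 / t with hmd
    have hy3m : y3 = m * t := by rw [hmd]; field_simp
    have hw1 : t*(w0 * t) = t*((l - m) * p) := by
      linear_combination t*hy1d + e1 - p*hy3m
    have hw1' : w0 * t = (l - m) * p := mul_left_cancel₀ (ne_of_gt htpos) hw1
    have hw2 : t*(w1 * t) = t*((l - m) * q) := by
      linear_combination t*hy2d + e2 - q*hy3m
    have hw2' : w1 * t = (l - m) * q := mul_left_cancel₀ (ne_of_gt htpos) hw2
    refine Or.inl ⟨m, by positivity, ?_, ?_⟩
    · have hnn : (w0^2 + w1^2) * t^2 = (l-m)^2 * t^2 := by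
        linear_combination (w0*t + (l-m)*p) * hw1' + (w1*t + (l-m)*q) * hw2' + (l-m)^2 * hbd
      have := mul_right_cancel₀ (ne_of_gt ht2) hnn
      linarith
    · have hv : v0*p + v1*q = (m + l - aa) * t := by
        have := hy3d
        rw [hy3m] at this; linarith
      have key : t * (v0*w0 + v1*w1) = t * ((l + m - aa) * (l - m)) := by
        calc t * (v0*w0 + v1*w1) = v0 * (w0*t) + v1 * (w1*t) := by ring
        _ = (l - m) * (v0*p + v1*q) := by rw [hw1', hw2']; ring
        _ = (l - m) * ((m + l - aa) * t) := by rw [hv]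
        _ = t * ((l + m - aa) * (l - m)) := by ring
      exact mul_left_cancel₀ (ne_of_gt htpos) key


lemma lemA (w v : Fin 2 → ℝ) (aa l : ℝ) (h : l ∈ sigmaL (blk 0 w v aa)) :
    (∃ m, 0 ≤ m ∧ (l - m)^2 = (w 0)^2 + (w 1)^2 ∧
      v 0 * w 0 + v 1 * w 1 = (l + m - aa) * (l - m)) ∨
    (l^2 - aa*l - (v 0 * w 0 + v 1 * w 1) = 0 ∧ (w 0)^2 + (w 1)^2 < l^2) := by
  obtain ⟨x, hx0, hxK, hyK, hdot⟩ := h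
  have hy : (blk 0 w v aa - l • 1) *ᵥ x =
      ![w 0 * x 2 - l * x 0, w 1 * x 2 - l * x 1,
        v 0 * x 0 + v 1 * x 1 + aa * x 2 - l * x 2] := by
    rw [resolvent_apply, blk_eq]
    funext i
    fin_cases i <;>
      simp [Matrix.mulVec, dotProduct, Fin.sum_univ_three] <;> ring
  rw [memcone_iff] at hxK
  rw [hy, memcone_iff] at hyK
  rw [hy] at hdot
  simp only [Matrix.cons_val_zero, Matrix.cons_val_one, Matrix.head_cons,
    Matrix.cons_val_two, Matrix.tail_cons] at hyK
  have hx0' : ¬(x 0 = 0 ∧ x 1 = 0 ∧ x 2 = 0) := by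
    rintro ⟨h0, h1, h2⟩
    exact hx0 (funext fun i => by fin_cases i <;> assumption)
  have hdot' : x 0 * (w 0 * x 2 - l * x 0) + x 1 * (w 1 * x 2 - l * x 1)
      + x 2 * (v 0 * x 0 + v 1 * x 1 + aa * x 2 - l * x 2) = 0 := by
    have e : x ⬝ᵥ ![w 0 * x 2 - l * x 0, w 1 * x 2 - l * x 1,
        v 0 * x 0 + v 1 * x 1 + aa * x 2 - l * x 2]
        = x 0 * (w 0 * x 2 - l * x 0) + x 1 * (w 1 * x 2 - l * x 1)
        + x 2 * (v 0 * x 0 + v 1 * x 1 + aa * x 2 - l * x 2) := by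
      simp [dotProduct, Fin.sum_univ_three]
      try ring
    rw [e] at hdot
    exact hdot
  exact lemA_scalar (w 0) (w 1) (v 0) (v 1) aa l (x 0) (x 1) (x 2)
    hxK.1 hxK.2 hx0' hyK.1 hyK.2 hdot'


lemma blk_add (X X' : Matrix (Fin 2) (Fin 2) ℝ) (u u' v v' : Fin 2 → ℝ) (a a' : ℝ) :
    blk X u v a + blk X' u' v' a' = blk (X + X') (u + u') (v + v') (a + a') := by
  funext i j
  rw [Matrix.add_apply, blk_eq, blk_eq, blk_eq]
  fin_cases i <;> fin_cases j <;> simp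

lemma blk_smul (r : ℝ) (X : Matrix (Fin 2) (Fin 2) ℝ) (u v : Fin 2 → ℝ) (a : ℝ) :
    r • blk X u v a = blk (r • X) (r • u) (r • v) (r * a) := by
  funext i j
  rw [Matrix.smul_apply, blk_eq, blk_eq]
  fin_cases i <;> fin_cases j <;> simp

lemma vec_decomp (u : Fin 2 → ℝ) : u = u 0 • ![(1:ℝ), 0] + u 1 • ![(0:ℝ), 1] := by
  funext i; fin_cases i <;> simp

lemma transfer (φ : Matrix (Fin 3) (Fin 3) ℝ →ₗ[ℝ] Matrix (Fin 3) (Fin 3) ℝ)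
    (hφ : ∀ A, sigmaL (φ A) = sigmaL A)
    (Q : Matrix (Fin 2) (Fin 2) ℝ) (hQ : Qᵀ * Q = 1)
    (hQφ : ∀ (v : Fin 2 → ℝ) (a : ℝ), φ (blk 0 0 v a) = blk 0 0 (Q *ᵥ v) a)
    (B1 B2 : Matrix (Fin 2) (Fin 2) ℝ)
    (hB1 : φ (blk 0 (Qᵀ *ᵥ ![1, 0]) 0 0) = blk B1 ![1, 0] 0 0)
    (hB2 : φ (blk 0 (Qᵀ *ᵥ ![0, 1]) 0 0) = blk B2 ![0, 1] 0 0)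
    (u v' : Fin 2 → ℝ) (aa : ℝ) :
    sigmaL (blk (u 0 • B1 + u 1 • B2) u v' aa) =
      sigmaL (blk 0 (Qᵀ *ᵥ u) (Qᵀ *ᵥ v') aa) := by
  have hQQT : Q * Qᵀ = 1 := mul_eq_one_comm.mp hQ
  have hQu : Qᵀ *ᵥ u = u 0 • Qᵀ *ᵥ ![1, 0] + u 1 • Qᵀ *ᵥ ![0, 1] := by
    conv_lhs => rw [vec_decomp u]
    rw [Matrix.mulVec_add, Matrix.mulVec_smul, Matrix.mulVec_smul]
  have harg : u 0 • ![(1:ℝ), 0] + u 1 • ![(0:ℝ), 1] + 0 = u := by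
    funext i; fin_cases i <;> simp
  have hdecomp : blk 0 (Qᵀ *ᵥ u) (Qᵀ *ᵥ v') aa
      = u 0 • blk 0 (Qᵀ *ᵥ ![1, 0]) 0 0 + u 1 • blk 0 (Qᵀ *ᵥ ![0, 1]) 0 0
        + blk 0 0 (Qᵀ *ᵥ v') aa := by
    rw [blk_smul, blk_smul, blk_add, blk_add, hQu]
    simp
  have himg : φ (blk 0 (Qᵀ *ᵥ u) (Qᵀ *ᵥ v') aa)
      = blk (u 0 • B1 + u 1 • B2) u v' aa := by
    rw [hdecomp, map_add, map_add, LinearMap.map_smul, LinearMap.map_smul,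
      hB1, hB2, hQφ]
    rw [Matrix.mulVec_mulVec, hQQT, Matrix.one_mulVec]
    rw [blk_smul, blk_smul, blk_add, blk_add, harg]
    simp
  rw [← himg, hφ]


lemma dotQ (Q : Matrix (Fin 2) (Fin 2) ℝ) (hQ : Qᵀ * Q = 1) (z w : Fin 2 → ℝ) :
    (Qᵀ *ᵥ z) 0 * (Qᵀ *ᵥ w) 0 + (Qᵀ *ᵥ z) 1 * (Qᵀ *ᵥ w) 1
      = z 0 * w 0 + z 1 * w 1 := by
  have h : (Qᵀ *ᵥ z) ⬝ᵥ (Qᵀ *ᵥ w) = z ⬝ᵥ w := by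
    rw [Matrix.dotProduct_mulVec, Matrix.vecMul_transpose, Matrix.mulVec_mulVec,
      mul_eq_one_comm.mp hQ, Matrix.one_mulVec]
  simpa [dotProduct, Fin.sum_univ_two] using h

lemma KL (φ : Matrix (Fin 3) (Fin 3) ℝ →ₗ[ℝ] Matrix (Fin 3) (Fin 3) ℝ)
    (hφ : ∀ A, sigmaL (φ A) = sigmaL A)
    (Q : Matrix (Fin 2) (Fin 2) ℝ) (hQ : Qᵀ * Q = 1)
    (hQφ : ∀ (v : Fin 2 → ℝ) (a : ℝ), φ (blk 0 0 v a) = blk 0 0 (Q *ᵥ v) a)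
    (B1 B2 : Matrix (Fin 2) (Fin 2) ℝ)
    (hB1 : φ (blk 0 (Qᵀ *ᵥ ![1, 0]) 0 0) = blk B1 ![1, 0] 0 0)
    (hB2 : φ (blk 0 (Qᵀ *ᵥ ![0, 1]) 0 0) = blk B2 ![0, 1] 0 0)
    (X Y l m aa u0 u1 v0 v1 : ℝ)
    (hXY : X^2 + Y^2 = 1) (hm : 0 ≤ m)
    (h1 : u0*(B1 0 0*X + B1 0 1*Y) + u1*(B2 0 0*X + B2 0 1*Y) + u0 = (l - m)*X)
    (h2 : u0*(B1 1 0*X + B1 1 1*Y) + u1*(B2 1 0*X + B2 1 1*Y) + u1 = (l - m)*Y)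
    (h3 : v0*X + v1*Y + aa - l = m) :
    (∃ m', 0 ≤ m' ∧ (l - m')^2 = u0^2 + u1^2 ∧
      v0*u0 + v1*u1 = (l + m' - aa) * (l - m')) ∨
    (l^2 - aa*l - (v0*u0 + v1*u1) = 0 ∧ u0^2 + u1^2 < l^2) := by
  set u : Fin 2 → ℝ := ![u0, u1] with hu
  set v' : Fin 2 → ℝ := ![v0, v1] with hv'
  have hmem : l ∈ sigmaL (blk (u 0 • B1 + u 1 • B2) u v' aa) := by
    apply lemB _ _ _ _ _ m X Y hXY hm
    · show (u 0 • B1 + u 1 • B2) 0 0 * X + (u 0 • B1 + u 1 • B2) 0 1 * Y + u 0 = _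
      simp only [hu, hv', Matrix.add_apply, Matrix.smul_apply, smul_eq_mul,
        Matrix.cons_val_zero, Matrix.cons_val_one, Matrix.head_cons]
      linear_combination h1
    · simp only [hu, hv', Matrix.add_apply, Matrix.smul_apply, smul_eq_mul,
        Matrix.cons_val_zero, Matrix.cons_val_one, Matrix.head_cons]
      linear_combination h2
    · simp only [hu, hv', Matrix.cons_val_zero, Matrix.cons_val_one, Matrix.head_cons]
      linear_combination h3
  rw [transfer φ hφ Q hQ hQφ B1 B2 hB1 hB2 u v' aa] at hmem
  have hres := lemA (Qᵀ *ᵥ u) (Qᵀ *ᵥ v') aa l hmem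
  have hnw : ((Qᵀ *ᵥ u) 0)^2 + ((Qᵀ *ᵥ u) 1)^2 = u0^2 + u1^2 := by
    have h := dotQ Q hQ u u
    simp only [hu, Matrix.cons_val_zero, Matrix.cons_val_one, Matrix.head_cons] at h
    linear_combination h
  have hvw : (Qᵀ *ᵥ v') 0 * (Qᵀ *ᵥ u) 0 + (Qᵀ *ᵥ v') 1 * (Qᵀ *ᵥ u) 1
      = v0*u0 + v1*u1 := by
    have h := dotQ Q hQ v' u
    simp only [hu, hv', Matrix.cons_val_zero, Matrix.cons_val_one, Matrix.head_cons] at h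
    linear_combination h
  rw [hnw, hvw] at hres
  exact hres


lemma sumsq_pos (x y : ℝ) (h : ¬(x = 0 ∧ y = 0)) : 0 < x^2 + y^2 := by
  rcases eq_or_ne x 0 with hx | hx
  · rcases eq_or_ne y 0 with hy | hy
    · exact absurd ⟨hx, hy⟩ h
    · have : 0 < y^2 := by positivity
      nlinarith [sq_nonneg x]
  · have : 0 < x^2 := by positivity
    nlinarith [sq_nonneg y]

lemma sq_zero_of_sumsq_zero (x y : ℝ) (h : x^2 + y^2 = 0) : x = 0 := by
  have h1 : x^2 = 0 := le_antisymm (by nlinarith [sq_nonneg y]) (sq_nonneg x)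
  exact pow_eq_zero_iff (two_ne_zero).elim |>.mp h1

set_option maxHeartbeats 2000000 in
lemma keyScalar (a b c d p q r s X Y : ℝ) (hXY : X^2 + Y^2 = 1)
    (KLor : ∀ l m aa u0 u1 v0 v1 : ℝ, 0 ≤ m →
      (u0*(a*X + b*Y) + u1*(p*X + q*Y) + u0 = (l - m)*X) →
      (u0*(c*X + d*Y) + u1*(r*X + s*Y) + u1 = (l - m)*Y) →
      (v0*X + v1*Y + aa - l = m) →
      ((∃ m', 0 ≤ m' ∧ (l - m')^2 = u0^2 + u1^2 ∧
          v0*u0 + v1*u1 = (l + m' - aa) * (l - m')) ∨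
        (l^2 - aa*l - (v0*u0 + v1*u1) = 0 ∧ u0^2 + u1^2 < l^2))) :
    (a*X + b*Y)*X + (p*X + q*Y)*Y = 0 ∧ (c*X + d*Y)*X + (r*X + s*Y)*Y = 0 := by
  obtain ⟨l11, hl11⟩ : ∃ z, z = a*X + b*Y + 1 := ⟨_, rfl⟩
  obtain ⟨l12, hl12⟩ : ∃ z, z = p*X + q*Y := ⟨_, rfl⟩
  obtain ⟨l21, hl21⟩ : ∃ z, z = c*X + d*Y := ⟨_, rfl⟩
  obtain ⟨l22, hl22⟩ : ∃ z, z = r*X + s*Y + 1 := ⟨_, rfl⟩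
  obtain ⟨dd, hdd⟩ : ∃ z, z = l11*l22 - l12*l21 := ⟨_, rfl⟩
  -- Step 1 : dd ≠ 0
  have hDne : dd ≠ 0 := by
    intro hD0
    obtain ⟨k1, k2, hkpos, hk1, hk2⟩ :
        ∃ k1 k2 : ℝ, 0 < k1^2 + k2^2 ∧ l11*k1 + l12*k2 = 0 ∧ l21*k1 + l22*k2 = 0 := by
      by_cases hrow : l22 = 0 ∧ l21 = 0
      · by_cases hrow1 : l11 = 0 ∧ l12 = 0
        · exact ⟨1, 0, by norm_num,
            by rw [hrow1.1, hrow1.2]; ring, by rw [hrow.1, hrow.2]; ring⟩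
        · refine ⟨l12, -l11, ?_, by ring, ?_⟩
          · have := sumsq_pos l11 l12 hrow1; nlinarith
          · rw [hrow.1, hrow.2]; ring
      · refine ⟨l22, -l21, ?_, ?_, by ring⟩
        · have := sumsq_pos l22 l21 hrow; nlinarith
        · linear_combination hD0 - hdd
    have hcon := KLor 0 0 0 k1 k2 0 0 le_rfl
      (by linear_combination hk1 - k1*hl11 - k2*hl12)
      (by linear_combination hk2 - k1*hl21 - (k2*hl22 - k2))
      (by ring)
    rcases hcon with ⟨m', hm', hnm, hvm⟩ | ⟨_, hlt⟩
    · nlinarith [hnm, hvm, hkpos]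
    · nlinarith [hlt, hkpos]
  -- adjugate vector
  obtain ⟨w01, hw01⟩ : ∃ z, z = l22*X - l12*Y := ⟨_, rfl⟩
  obtain ⟨w02, hw02⟩ : ∃ z, z = l11*Y - l21*X := ⟨_, rfl⟩
  have hLw1 : l11*w01 + l12*w02 = dd*X := by
    linear_combination l11*hw01 + l12*hw02 - X*hdd
  have hLw2 : l21*w01 + l22*w02 = dd*Y := by
    linear_combination l21*hw01 + l22*hw02 - Y*hdd
  have hw0ne : 0 < w01^2 + w02^2 := by
    rcases eq_or_lt_of_le (by positivity : (0:ℝ) ≤ w01^2 + w02^2) with h0 | h0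
    · exfalso
      have hw010 : w01 = 0 := sq_zero_of_sumsq_zero _ _ h0.symm
      have hw020 : w02 = 0 := by
        have := sq_zero_of_sumsq_zero w02 w01 (by linarith [h0]) ; exact this
      apply hDne
      have hdx : dd*X = 0 := by rw [← hLw1, hw010, hw020]; ring
      have hdy : dd*Y = 0 := by rw [← hLw2, hw010, hw020]; ring
      have : dd^2 = 0 := by nlinarith [hdx, hdy, hXY]
      exact pow_eq_zero_iff (two_ne_zero).elim |>.mp this
    · exact h0
  obtain ⟨uu0, huu0⟩ : ∃ z, z = -dd*w01 := ⟨_, rfl⟩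
  obtain ⟨uu1, huu1⟩ : ∃ z, z = -dd*w02 := ⟨_, rfl⟩
  have hLu1 : l11*uu0 + l12*uu1 = -(dd^2)*X := by
    linear_combination l11*huu0 + l12*huu1 - dd*hLw1
  have hLu2 : l21*uu0 + l22*uu1 = -(dd^2)*Y := by
    linear_combination l21*huu0 + l22*huu1 - dd*hLw2
  have hdd2pos : 0 < dd^2 := by positivity
  -- Step 2 : norm identity  w01^2+w02^2 = dd^2
  have hnorm : w01^2 + w02^2 = dd^2 := by
    have hcon := KLor (-(dd^2)/2) (dd^2/2) 0 uu0 uu1 0 0 (by positivity)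
      (by linear_combination hLu1 - uu0*hl11 - uu1*hl12 + uu0*1)
      (by linear_combination hLu2 - uu0*hl21 - uu1*hl22 + uu1*1)
      (by ring)
    have hSu : uu0^2 + uu1^2 = dd^2*(w01^2 + w02^2) := by
      linear_combination (uu0 - dd*w01)*huu0 + (uu1 - dd*w02)*huu1
    rcases hcon with ⟨m', hm', hnm, hvm⟩ | ⟨heq, _⟩
    · -- hvm : 0 = (l+m')(l-m') with l = -(dd^2)/2
      -- cases on l - m' = 0 or l + m' = 0
      have hfact : (-(dd^2)/2 - m') * (-(dd^2)/2 + m') = 0 := by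
        linear_combination -hvm
      rcases mul_eq_zero.mp hfact with h0 | h0
      · -- l - m' = 0 : then norm = 0, contradiction
        exfalso
        have hz : uu0^2 + uu1^2 = 0 := by
          linear_combination -hnm + (-(dd^2)/2 - m')*h0
        rw [hSu] at hz
        nlinarith [hz, hw0ne, hdd2pos]
      · -- m' = dd^2/2 : (l-m')^2 = dd^4
        have hm'val : m' = dd^2/2 := by linarith
        rw [hm'val] at hnm
        -- hnm : (-(dd^2)/2 - dd^2/2)^2 = uu0^2+uu1^2
        have : dd^2*(w01^2+w02^2) = dd^2*dd^2 := by
          rw [← hSu]; linear_combination -hnm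
        exact mul_left_cancel₀ (by positivity) this
    · exfalso
      have h4 : dd^4 = 0 := by linear_combination 4*heq
      have h5 : 0 < dd^4 := by positivity
      linarith
  -- Step 3 : pigeonhole, conclude jj = -ee where ee = dd^2, jj = X*uu0+Y*uu1
  obtain ⟨ee, hee⟩ : ∃ z, z = dd^2 := ⟨_, rfl⟩
  obtain ⟨jj, hjj⟩ : ∃ z, z = X*uu0 + Y*uu1 := ⟨_, rfl⟩
  have heepos : 0 < ee := by rw [hee]; positivity
  have hSu : uu0^2 + uu1^2 = ee^2 := by
    linear_combination (uu0 - dd*w01)*huu0 + (uu1 - dd*w02)*huu1 + dd^2*hnorm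
      - (ee + dd^2)*hee
  have hident : jj^2 + (X*uu1 - Y*uu0)^2 = ee^2 := by
    linear_combination (jj + X*uu0 + Y*uu1)*hjj + (uu0^2 + uu1^2)*hXY + hSu
  have hJle : jj^2 ≤ ee^2 := by
    linarith [sq_nonneg (X*uu1 - Y*uu0), hident]
  have hJval : jj = -ee := by
    by_contra hJne
    have hJne' : jj + ee ≠ 0 := fun h => hJne (by linarith)
    have H : ∀ aa : ℝ, aa = 3*ee + 2 ∨
        (ee - jj)*aa = (ee + 2)*ee - (3*ee + 2)*jj ∨
        (jj - (ee + 1))*aa = (3*ee + 2)*jj - (ee + 1)^2 := by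
      intro aa
      have hcon := KLor (ee + 1) (2*ee + 1) aa uu0 uu1
        ((3*ee + 2 - aa)*X) ((3*ee + 2 - aa)*Y) (by linarith)
        (by linear_combination hLu1 - uu0*hl11 - uu1*hl12 + X*hee)
        (by linear_combination hLu2 - uu0*hl21 - uu1*hl22 + Y*hee)
        (by linear_combination (3*ee + 2 - aa)*hXY)
      rcases hcon with ⟨m', hm', hsq, hveq⟩ | ⟨heq, _⟩
      · rw [hSu] at hsq
        have hfact : (m' - 1)*(m' - (2*ee + 1)) = 0 := by linear_combination hsq
        rcases mul_eq_zero.mp hfact with h0 | h0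
        · right; left
          linear_combination hveq + (3*ee + 2 - aa)*hjj + (aa - 1 - m')*h0
        · left
          have hz : (3*ee + 2 - aa)*(jj + ee) = 0 := by
            linear_combination hveq + (3*ee + 2 - aa)*hjj - (2*ee + 1 - aa + m')*h0
          have := (mul_eq_zero.mp hz).resolve_right hJne'
          linarith
      · right; right
        linear_combination heq - (3*ee + 2 - aa)*hjj
    have pair2 : ∀ A B : ℝ, A ≠ B →
        (ee - jj)*A = (ee + 2)*ee - (3*ee + 2)*jj →
        (ee - jj)*B = (ee + 2)*ee - (3*ee + 2)*jj → False := by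
      intro A B hAB h1 h2
      have h3 : (ee - jj)*(A - B) = 0 := by linear_combination h1 - h2
      have hEJ : ee - jj = 0 := by
        rcases mul_eq_zero.mp h3 with h | h
        · exact h
        · exact absurd (by linarith : A = B) hAB
      have h4 : 2*ee^2 = 0 := by linear_combination h1 + (3*ee + 2 - A)*hEJ
      have h5 : 0 < ee^2 := by positivity
      linarith
    have pair3 : ∀ A B : ℝ, A ≠ B →
        (jj - (ee + 1))*A = (3*ee + 2)*jj - (ee + 1)^2 →
        (jj - (ee + 1))*B = (3*ee + 2)*jj - (ee + 1)^2 → False := by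
      intro A B hAB h1 h2
      have h3 : (jj - (ee + 1))*(A - B) = 0 := by linear_combination h1 - h2
      have hJ1 : jj - (ee + 1) = 0 := by
        rcases mul_eq_zero.mp h3 with h | h
        · exact h
        · exact absurd (by linarith : A = B) hAB
      have hjv : jj = ee + 1 := by linarith
      rw [hjv] at hJle
      nlinarith [hJle, heepos]
    have Ha := H (3*ee + 3)
    have Hb := H (3*ee + 4)
    have Hc := H (3*ee + 5)
    have hne1 : ¬((3*ee + 3 : ℝ) = 3*ee + 2) := by intro h; linarith
    have hne2 : ¬((3*ee + 4 : ℝ) = 3*ee + 2) := by intro h; linarith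
    have hne3 : ¬((3*ee + 5 : ℝ) = 3*ee + 2) := by intro h; linarith
    rcases Ha with h | ha | ha
    · exact hne1 h
    · rcases Hb with h | hb | hb
      · exact hne2 h
      · exact pair2 _ _ (by intro h; linarith) ha hb
      · rcases Hc with h | hc | hc
        · exact hne3 h
        · exact pair2 _ _ (by intro h; linarith) ha hc
        · exact pair3 _ _ (by intro h; linarith) hb hc
    · rcases Hb with h | hb | hb
      · exact hne2 h
      · rcases Hc with h | hc | hc
        · exact hne3 h
        · exact pair2 _ _ (by intro h; linarith) hb hc
        · exact pair3 _ _ (by intro h; linarith) ha hc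
      · exact pair3 _ _ (by intro h; linarith) ha hb
  -- Step 4 : conclude N zeta = 0
  have hJcomb : X*uu0 + Y*uu1 = -ee := by rw [← hjj]; exact hJval
  have hzero : (uu0 + ee*X)^2 + (uu1 + ee*Y)^2 = 0 := by
    linear_combination hSu + 2*ee*hJcomb + ee^2*hXY
  have huu0X : uu0 + ee*X = 0 := sq_zero_of_sumsq_zero _ _ hzero
  have huu1Y : uu1 + ee*Y = 0 :=
    sq_zero_of_sumsq_zero (uu1 + ee*Y) (uu0 + ee*X) (by linarith [hzero])
  have hw01z : dd*(dd*X - w01) = 0 := by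
    linear_combination huu0X - huu0 - X*hee
  have hw01X : w01 = dd*X := by
    have := (mul_eq_zero.mp hw01z).resolve_left hDne
    linarith
  have hw02z : dd*(dd*Y - w02) = 0 := by
    linear_combination huu1Y - huu1 - Y*hee
  have hw02Y : w02 = dd*Y := by
    have := (mul_eq_zero.mp hw02z).resolve_left hDne
    linarith
  obtain ⟨gg, hgg⟩ : ∃ z, z = l11 + l22 - dd := ⟨_, rfl⟩
  have h1' : (l11 - gg)*X + l12*Y = 0 := by
    linear_combination -X*hgg + hw01 - hw01X
  have h2' : l21*X + (l22 - gg)*Y = 0 := by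
    linear_combination -Y*hgg + hw02 - hw02Y
  have hEX : (dd - gg*(l11 + l22) + gg^2)*X = 0 := by
    linear_combination (l22 - gg)*h1' - l12*h2' + X*hdd
  have hEY : (dd - gg*(l11 + l22) + gg^2)*Y = 0 := by
    linear_combination (-l21)*h1' + (l11 - gg)*h2' + Y*hdd
  have hE : dd - gg*(l11 + l22) + gg^2 = 0 := by
    linear_combination X*hEX + Y*hEY - (dd - gg*(l11 + l22) + gg^2)*hXY
  have hfact : dd*(1 - (l11 + l22) + dd) = 0 := by
    linear_combination hE - (gg - dd)*hgg
  have hSig : l11 + l22 = 1 + dd := by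
    have := (mul_eq_zero.mp hfact).resolve_left hDne
    linarith
  constructor
  · linear_combination h1' + X*hgg + X*hSig - X*hl11 - Y*hl12
  · linear_combination h2' + Y*hgg + Y*hSig - X*hl21 - Y*hl22


theorem B1_B2_form
    (φ : Matrix (Fin 3) (Fin 3) ℝ →ₗ[ℝ] Matrix (Fin 3) (Fin 3) ℝ)
    (hφ : ∀ A, sigmaL (φ A) = sigmaL A)
    (Q : Matrix (Fin 2) (Fin 2) ℝ) (hQ : Qᵀ * Q = 1)
    (hQφ : ∀ (v : Fin 2 → ℝ) (a : ℝ), φ (blk 0 0 v a) = blk 0 0 (Q *ᵥ v) a)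
    (B1 B2 : Matrix (Fin 2) (Fin 2) ℝ)
    (hB1 : φ (blk 0 (Qᵀ *ᵥ ![1, 0]) 0 0) = blk B1 ![1, 0] 0 0)
    (hB2 : φ (blk 0 (Qᵀ *ᵥ ![0, 1]) 0 0) = blk B2 ![0, 1] 0 0) :
    ∃ x y : ℝ, B1 = !![0, x; 0, y] ∧ B2 = !![-x, 0; -y, 0] := by
  have key : ∀ X Y : ℝ, X^2 + Y^2 = 1 →
      (B1 0 0*X + B1 0 1*Y)*X + (B2 0 0*X + B2 0 1*Y)*Y = 0 ∧
      (B1 1 0*X + B1 1 1*Y)*X + (B2 1 0*X + B2 1 1*Y)*Y = 0 := by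
    intro X Y hXY
    exact keyScalar (B1 0 0) (B1 0 1) (B1 1 0) (B1 1 1)
      (B2 0 0) (B2 0 1) (B2 1 0) (B2 1 1) X Y hXY
      (fun l m aa u0 u1 v0 v1 hm h1 h2 h3 =>
        KL φ hφ Q hQ hQφ B1 B2 hB1 hB2 X Y l m aa u0 u1 v0 v1 hXY hm h1 h2 h3)
  have k10 := key 1 0 (by norm_num)
  have k01 := key 0 1 (by norm_num)
  have k35 := key (3/5) (4/5) (by norm_num)
  have ha : B1 0 0 = 0 := by linear_combination k10.1
  have hc : B1 1 0 = 0 := by linear_combination k10.2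
  have hq : B2 0 1 = 0 := by linear_combination k01.1
  have hs : B2 1 1 = 0 := by linear_combination k01.2
  have hp : B2 0 0 = -(B1 0 1) := by
    linear_combination (25/12)*k35.1 - (3/4)*ha - (4/3)*hq
  have hr : B2 1 0 = -(B1 1 1) := by
    linear_combination (25/12)*k35.2 - (3/4)*hc - (4/3)*hs
  refine ⟨B1 0 1, B1 1 1, ?_, ?_⟩
  · funext i j
    fin_cases i <;> fin_cases j <;>
      simp [ha, hc, Matrix.cons_val_zero, Matrix.cons_val_one, Matrix.head_cons]
  · funext i j
    fin_cases i <;> fin_cases j <;>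
      simp [hp, hq, hr, hs, Matrix.cons_val_zero, Matrix.cons_val_one, Matrix.head_cons]
end
end
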